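/- arXiv:2510.26123 — 8 statements merged into one kernel-verified Lean document; each statement's English description precedes it below -/
import Mathlib

section
/- Let L : ℕ → ℤ be a random walk started from 0 with i.i.d. increments uniformly distributed on {−1, 0, 1}, and define the reflected walk L̂(j) := L(j) − 2·min_{0≤i≤j} L(i). Then for every n ∈ ℕ and every path w : {0,1,…,n} → ℤ with w(0) = 0, w(j) − w(j−1) ∈ {−1,0,1} for all 1 ≤ j ≤ n, and w(j) ≥ 0 for all 0 ≤ j ≤ n, one has ℙ[L̂(j) = w(j) for all 0 ≤ j ≤ n] = (w(n) + 1)·3^{−n}. Equivalently, the law of (L̂(0),…,L̂(n)) is the law of (L(0),…,L(n)) reweighted by the factor (L(n)+1)·𝟙{L(j) ≥ 0 for all 0 ≤ j ≤ n}, i.e. L̂ is the lazy walk conditioned to stay non-negative. -/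
/-!
On [0, n] the reflected path `L - 2 min L` together with the final minimum `m = min_{i ≤ n} L i`
determines the path: going backwards from `n`, the running minimum at time `j` is
`max (m, max_{j ≤ i < n} -Lhat i)`, and `L = Lhat + 2 · (running minimum)`.  Conversely, for a
non-negative lazy path `w` every `m ∈ [-w n, 0]` yields in this way a lazy path from `0` whose
reflection is `w`.  Hence exactly `w n + 1` increment patterns in `{-1, 0, 1}ⁿ` are reflected
onto `w`, and each of them has probability `3⁻ⁿ`.
-/

open MeasureTheory

namespace LazyWalk

def runMin (x : ℕ → ℤ) (j : ℕ) : ℤ :=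
  (Finset.range (j + 1)).inf' Finset.nonempty_range_add_one x

def reflect (x : ℕ → ℤ) (j : ℕ) : ℤ := x j - 2 * runMin x j

lemma runMin_zero (x : ℕ → ℤ) : runMin x 0 = x 0 := by
  simp [runMin]

lemma runMin_succ (x : ℕ → ℤ) (j : ℕ) : runMin x (j + 1) = min (runMin x j) (x (j + 1)) := by
  rw [runMin, Finset.inf'_congr _ Finset.range_add_one (fun _ _ => rfl), Finset.inf'_insert,
    min_comm]
  rfl

lemma runMin_le (x : ℕ → ℤ) {i j : ℕ} (h : i ≤ j) : runMin x j ≤ x i :=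
  Finset.inf'_le _ (Finset.mem_range.2 (Nat.lt_succ_of_le h))

lemma runMin_congr {x y : ℕ → ℤ} {j : ℕ} (h : ∀ i ≤ j, x i = y i) : runMin x j = runMin y j :=
  Finset.inf'_congr _ rfl fun i hi => h i (Nat.lt_succ_iff.1 (Finset.mem_range.1 hi))

lemma reflect_congr {x y : ℕ → ℤ} {j : ℕ} (h : ∀ i ≤ j, x i = y i) :
    reflect x j = reflect y j := by
  rw [reflect, reflect, h j le_rfl, runMin_congr h]

def incr (x : ℕ → ℤ) (n : ℕ) : Fin n → ℤ := fun i => x (i + 1) - x i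

lemma incr_congr {x y : ℕ → ℤ} {n : ℕ} (h : ∀ j ≤ n, x j = y j) : incr x n = incr y n :=
  funext fun i => by simp only [incr, h i i.isLt.le, h (i + 1) i.isLt]

lemma eqOn_of_incr_eq {x y : ℕ → ℤ} {n : ℕ} (h0 : x 0 = y 0) (h : incr x n = incr y n) :
    ∀ j ≤ n, x j = y j := by
  intro j hj
  induction j with
  | zero => exact h0
  | succ j ih =>
    have hstep := congrFun h ⟨j, hj⟩
    simp only [incr] at hstep
    linarith [ih (by omega)]

def lazyIncrements (n : ℕ) : Finset (Fin n → ℤ) :=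
  Fintype.piFinset fun _ => {-1, 0, 1}

lemma card_lazyIncrements (n : ℕ) : (lazyIncrements n).card = 3 ^ n := by
  simp [lazyIncrements]

lemma incr_mem_lazyIncrements_iff {x : ℕ → ℤ} {n : ℕ} :
    incr x n ∈ lazyIncrements n ↔ ∀ j < n, -1 ≤ x (j + 1) - x j ∧ x (j + 1) - x j ≤ 1 := by
  simp only [lazyIncrements, Fintype.mem_piFinset, incr, Fin.forall_iff, Finset.mem_insert,
    Finset.mem_singleton]
  exact forall₂_congr fun j _ => by omega

section Reconstruction

variable {w : ℕ → ℤ} {n : ℕ} {m : ℤ}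

def reconstructMin (w : ℕ → ℤ) (n : ℕ) (m : ℤ) (j : ℕ) : ℤ :=
  (Finset.Ico j n).fold max m fun i => -w i

def reconstruct (w : ℕ → ℤ) (n : ℕ) (m : ℤ) (j : ℕ) : ℤ := w j + 2 * reconstructMin w n m j

lemma reconstructMin_self : reconstructMin w n m n = m := by
  simp [reconstructMin]

lemma reconstructMin_of_lt {j : ℕ} (hj : j < n) :
    reconstructMin w n m j = max (-w j) (reconstructMin w n m (j + 1)) := by
  rw [reconstructMin, ← Finset.insert_Ico_add_one_left_eq_Ico hj, Finset.fold_insert (by simp)]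
  rfl

lemma neg_le_reconstructMin (hm : -w n ≤ m) {j : ℕ} (hj : j ≤ n) :
    -w j ≤ reconstructMin w n m j := by
  rcases hj.lt_or_eq with hj | rfl
  · exact reconstructMin_of_lt hj ▸ le_max_left _ _
  · rwa [reconstructMin_self]

lemma reconstructMin_nonpos (hwnn : ∀ j ≤ n, 0 ≤ w j) (hm : m ≤ 0) (j : ℕ) :
    reconstructMin w n m j ≤ 0 :=
  (Finset.fold_max_le 0).2 ⟨hm, fun i hi => neg_nonpos.2 (hwnn i (Finset.mem_Ico.1 hi).2.le)⟩

lemma reconstructMin_zero (hw0 : w 0 = 0) (hwnn : ∀ j ≤ n, 0 ≤ w j) (hm : -w n ≤ m)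
    (hm' : m ≤ 0) : reconstructMin w n m 0 = 0 :=
  le_antisymm (reconstructMin_nonpos hwnn hm' 0)
    (by simpa [hw0] using neg_le_reconstructMin hm n.zero_le)

lemma reconstruct_zero (hw0 : w 0 = 0) (hwnn : ∀ j ≤ n, 0 ≤ w j) (hm : -w n ≤ m)
    (hm' : m ≤ 0) : reconstruct w n m 0 = 0 := by
  rw [reconstruct, hw0, reconstructMin_zero hw0 hwnn hm hm', mul_zero, add_zero]

lemma reconstruct_self : reconstruct w n m n = w n + 2 * m := by
  rw [reconstruct, reconstructMin_self]

section

variable (hw : ∀ j < n, -1 ≤ w (j + 1) - w j ∧ w (j + 1) - w j ≤ 1) (hm : -w n ≤ m)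
include hw hm

lemma reconstruct_step {j : ℕ} (hj : j < n) :
    -1 ≤ reconstruct w n m (j + 1) - reconstruct w n m j ∧
      reconstruct w n m (j + 1) - reconstruct w n m j ≤ 1 := by
  have := reconstructMin_of_lt (w := w) (m := m) hj
  have := neg_le_reconstructMin hm (j := j + 1) hj
  have := hw j hj
  simp only [reconstruct]
  omega

lemma runMin_reconstruct (hw0 : w 0 = 0) (hwnn : ∀ j ≤ n, 0 ≤ w j) (hm' : m ≤ 0) {j : ℕ}
    (hj : j ≤ n) : runMin (reconstruct w n m) j = reconstructMin w n m j := by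
  induction j with
  | zero =>
    rw [runMin_zero, reconstruct_zero hw0 hwnn hm hm', reconstructMin_zero hw0 hwnn hm hm']
  | succ j ih =>
    have := reconstructMin_of_lt (w := w) (m := m) hj
    have := neg_le_reconstructMin hm (j := j + 1) hj
    have := hw j hj
    rw [runMin_succ, ih (by omega), reconstruct]
    omega

lemma reflect_reconstruct (hw0 : w 0 = 0) (hwnn : ∀ j ≤ n, 0 ≤ w j) (hm' : m ≤ 0) {j : ℕ}
    (hj : j ≤ n) : reflect (reconstruct w n m) j = w j := by
  rw [reflect, runMin_reconstruct hw hm hw0 hwnn hm' hj, reconstruct]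
  ring

end

lemma runMin_eq_reconstructMin_of_reflect_eq {x : ℕ → ℤ} (hx : ∀ j < n, -1 ≤ x (j + 1) - x j)
    (hxw : ∀ j ≤ n, reflect x j = w j) {j : ℕ} (hj : j ≤ n) :
    runMin x j = reconstructMin w n (runMin x n) j := by
  induction hj using Nat.decreasingInduction with
  | self => rw [reconstructMin_self]
  | of_succ k hk ih =>
    have := runMin_succ x k
    have := runMin_le x (le_refl k)
    have := hx k hk
    have := hxw k hk.le
    rw [reconstructMin_of_lt hk, ← ih, reflect] at *
    omega

lemma eq_reconstruct_of_reflect_eq {x : ℕ → ℤ} (hx : ∀ j < n, -1 ≤ x (j + 1) - x j)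
    (hxw : ∀ j ≤ n, reflect x j = w j) {j : ℕ} (hj : j ≤ n) :
    x j = reconstruct w n (runMin x n) j := by
  rw [reconstruct, ← runMin_eq_reconstructMin_of_reflect_eq hx hxw hj, ← hxw j hj, reflect]
  ring

end Reconstruction

section Fiber

variable {w : ℕ → ℤ} {n : ℕ}

noncomputable def reflectFiber (w : ℕ → ℤ) (n : ℕ) : Finset (Fin n → ℤ) :=
  (Finset.Icc (-w n) 0).image fun m => incr (reconstruct w n m) n

lemma reflectFiber_subset_lazyIncrements
    (hw : ∀ j < n, -1 ≤ w (j + 1) - w j ∧ w (j + 1) - w j ≤ 1) :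
    reflectFiber w n ⊆ lazyIncrements n := by
  intro ε hε
  obtain ⟨m, hm, rfl⟩ := Finset.mem_image.1 hε
  exact incr_mem_lazyIncrements_iff.2 fun j hj => reconstruct_step hw (Finset.mem_Icc.1 hm).1 hj

lemma incr_mem_reflectFiber_iff (hw0 : w 0 = 0)
    (hw : ∀ j < n, -1 ≤ w (j + 1) - w j ∧ w (j + 1) - w j ≤ 1) (hwnn : ∀ j ≤ n, 0 ≤ w j)
    {x : ℕ → ℤ} (hx0 : x 0 = 0) :
    incr x n ∈ reflectFiber w n ↔ incr x n ∈ lazyIncrements n ∧ ∀ j ≤ n, reflect x j = w j := by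
  constructor
  · intro hε
    refine ⟨reflectFiber_subset_lazyIncrements hw hε, ?_⟩
    obtain ⟨m, hm, hxm⟩ := Finset.mem_image.1 hε
    obtain ⟨hm, hm'⟩ := Finset.mem_Icc.1 hm
    have hx_eq := eqOn_of_incr_eq (hx0.trans (reconstruct_zero hw0 hwnn hm hm').symm) hxm.symm
    intro j hj
    rw [reflect_congr fun i hi => hx_eq i (hi.trans hj),
      reflect_reconstruct hw hm hw0 hwnn hm' hj]
  · rintro ⟨hlazy, hxw⟩
    have hx j hj := (incr_mem_lazyIncrements_iff.1 hlazy j hj).1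
    have hmin := runMin_le x n.zero_le
    have hlast := runMin_le x (le_refl n)
    have hwn := hxw n le_rfl
    rw [reflect] at hwn
    refine Finset.mem_image.2 ⟨runMin x n, Finset.mem_Icc.2 ⟨by omega, by omega⟩, ?_⟩
    exact incr_congr fun j hj => (eq_reconstruct_of_reflect_eq hx hxw hj).symm

lemma card_reflectFiber (hw0 : w 0 = 0) (hwnn : ∀ j ≤ n, 0 ≤ w j) :
    ((reflectFiber w n).card : ℤ) = w n + 1 := by
  rw [reflectFiber, Finset.card_image_of_injOn, Int.card_Icc, Int.toNat_of_nonneg (by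
    linarith [hwnn n le_rfl])]
  · ring
  intro m hm m' hm' h
  obtain ⟨hm, hm0⟩ := Finset.mem_Icc.1 hm
  obtain ⟨hm', hm0'⟩ := Finset.mem_Icc.1 hm'
  have := eqOn_of_incr_eq ((reconstruct_zero hw0 hwnn hm hm0).trans
    (reconstruct_zero hw0 hwnn hm' hm0').symm) h n le_rfl
  rw [reconstruct_self, reconstruct_self] at this
  omega

end Fiber

lemma measureReal_eq_card_mul_of_uniform {Ω α : Type*} [MeasurableSpace Ω] [MeasurableSpace α]
    [MeasurableSingletonClass α] {P : Measure Ω} [IsProbabilityMeasure P] {X : Ω → α}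
    (hX : Measurable X) {T S : Finset α} {p : ℝ} (hp : ∀ a ∈ T, P.real (X ⁻¹' {a}) = p)
    (hT : T.card * p = 1) (hS : S ⊆ T) {A : Set Ω} (hA : A ∩ X ⁻¹' T = X ⁻¹' S) :
    P.real A = S.card * p := by
  have hsum : ∀ U ⊆ T, P.real (X ⁻¹' U) = U.card * p := by
    intro U hU
    rw [← map_measureReal_apply hX U.measurableSet, ← sum_measureReal_singleton,
      Finset.sum_congr rfl fun a ha => ?_, Finset.sum_const, nsmul_eq_mul]
    rw [map_measureReal_apply hX (measurableSet_singleton a), hp a (hU ha)]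
  have hfull : X ⁻¹' T =ᵐ[P] Set.univ := by
    rw [ae_eq_univ, prob_compl_eq_zero_iff (hX T.measurableSet), ← ENNReal.toReal_eq_one_iff]
    exact (hsum T le_rfl).trans hT
  rw [← measureReal_congr (inter_ae_eq_left_of_ae_eq_univ hfull), hA, hsum S hS]

end LazyWalk

open LazyWalk in
/-- **Pitman-type statement for the lazy walk.**
Let `L` be a random walk started from `0` with i.i.d. increments uniform on `{-1,0,1}`
(encoded by specifying the probability of every admissible finite increment pattern),
and let `Lhat j = L j - 2 * min_{0 ≤ i ≤ j} L i` be the walk reflected at its running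
minimum.  Then for every non-negative lazy path `w` of length `n` started at `0`,
`ℙ[Lhat j = w j for all j ≤ n] = (w n + 1) * 3⁻ⁿ`; i.e. `Lhat` is the lazy walk
conditioned to stay non-negative. -/
theorem stmt_0
    {Ω : Type*} [MeasurableSpace Ω] (P : Measure Ω) [IsProbabilityMeasure P]
    (L : ℕ → Ω → ℤ)
    (hMeas : ∀ n, Measurable (L n))
    (hStart : ∀ ω, L 0 ω = 0)
    (hIID : ∀ (n : ℕ) (ε : Fin n → ℤ), (∀ j, ε j ∈ ({-1, 0, 1} : Set ℤ)) →
      (P {ω | ∀ j : Fin n, L ((j : ℕ) + 1) ω - L (j : ℕ) ω = ε j}).toReal = (1 / 3 : ℝ) ^ n)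
    (Lhat : ℕ → Ω → ℤ)
    (hLhat : ∀ j ω, Lhat j ω =
      L j ω - 2 * (Finset.range (j + 1)).inf' Finset.nonempty_range_add_one (fun i => L i ω)) :
    ∀ (n : ℕ) (w : ℕ → ℤ), w 0 = 0 →
      (∀ j, 1 ≤ j → j ≤ n → w j - w (j - 1) ∈ ({-1, 0, 1} : Set ℤ)) →
      (∀ j ≤ n, 0 ≤ w j) →
      (P {ω | ∀ j ≤ n, Lhat j ω = w j}).toReal = ((w n : ℝ) + 1) * (1 / 3 : ℝ) ^ n := by
  intro n w hw0 hstep hwnn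
  have hw : ∀ j < n, -1 ≤ w (j + 1) - w j ∧ w (j + 1) - w j ≤ 1 := fun j hj => by
    have := hstep (j + 1) (by omega) hj
    simp only [Nat.add_sub_cancel, Set.mem_insert_iff, Set.mem_singleton_iff] at this
    omega
  set X : Ω → Fin n → ℤ := fun ω => incr (L · ω) n
  have hX : Measurable X := measurable_pi_lambda _ fun i => (hMeas _).sub (hMeas _)
  have hp : ∀ ε ∈ lazyIncrements n, P.real (X ⁻¹' {ε}) = (1 / 3 : ℝ) ^ n := fun ε hε => by
    have hcyl : X ⁻¹' {ε} = {ω | ∀ j : Fin n, L (j + 1) ω - L j ω = ε j} := by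
      ext ω
      simp [X, incr, funext_iff]
    rw [hcyl]
    exact hIID n ε fun j => by simpa using Fintype.mem_piFinset.1 hε j
  -- off the lazy increments the event is not determined by them: `0, 1, -1` reflects to `0, 1, 1`
  have hA :
      {ω | ∀ j ≤ n, Lhat j ω = w j} ∩ X ⁻¹' lazyIncrements n = X ⁻¹' reflectFiber w n := by
    ext ω
    have hLω : ∀ j, Lhat j ω = reflect (L · ω) j := fun j => hLhat j ω
    simp only [Set.mem_inter_iff, Set.mem_ofPred_eq, Set.mem_preimage, Finset.mem_coe, hLω,
      X, incr_mem_reflectFiber_iff hw0 hw hwnn (x := (L · ω)) (hStart ω), and_comm]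
  have hT : ((lazyIncrements n).card : ℝ) * (1 / 3) ^ n = 1 := by
    rw [card_lazyIncrements, Nat.cast_pow, ← mul_pow]
    norm_num
  rw [← measureReal_def, measureReal_eq_card_mul_of_uniform hX hp hT
    (reflectFiber_subset_lazyIncrements hw) hA]
  exact_mod_cast congrArg (fun k : ℤ => (k : ℝ) * (1 / 3 : ℝ) ^ n) (card_reflectFiber hw0 hwnn)
end

section
/- For all integers x ≥ 0, y ∈ ℤ, and 0 ≤ s ≤ x, if the chain Ẑ = (L̂, R̂) is started from (x, y), then ℙ[ L̂(j) ≥ x − s for all j ≥ 0 ] = (s+1)/(x+1). -/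
open MeasureTheory

/-- Transition probabilities of the conditioned walk `Ẑ` on `ℕ × ℤ`
(the Doob h-transform, with harmonic function `h(x,y) = x + 1`, of the walk with i.i.d.
increments uniform on `{(1,-1), (-1,0), (0,1)}`): from `(x,y)`, jump to `(x+1, y-1)`
with probability `(x+2)/(3(x+1))`, to `(x-1, y)` with probability `x/(3(x+1))`, and
to `(x, y+1)` with probability `1/3`. -/
noncomputable def transProb : ℕ × ℤ → ℕ × ℤ → ℝ := fun p q =>
  if q.1 = p.1 + 1 ∧ q.2 = p.2 - 1 then ((p.1 : ℝ) + 2) / (3 * ((p.1 : ℝ) + 1))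
  else if q.1 + 1 = p.1 ∧ q.2 = p.2 then (p.1 : ℝ) / (3 * ((p.1 : ℝ) + 1))
  else if q.1 = p.1 ∧ q.2 = p.2 + 1 then 1 / 3
  else 0

/-!
Only the first coordinate matters. Let `F n a` be the probability that `L̂`, started at `a ≥ m`,
stays `≥ m` for `n` steps, and `T` the one-step operator of `L̂` killed below `m`, so that
`F (n + 1) = T (F n)`. This identity is read off the cylinder probabilities by summing over the
`3 ^ n` step sequences; their cylinders carry total mass one, so no other path is charged.
`F n` decreases to a fixed point `f ≤ 1` of `T`. Undoing the `h`-transform, `u a = (a + 1) f a`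
is harmonic for the lazy simple random walk killed below `m`, hence `u (m + k) = (k + 1) u m`.
Boundedness of `f` forces `u m ≤ 1`; the function `(a + 1 - m) / (a + 1) ≤ 1`, which `T` fixes
on `a ≥ m`, bounds every `F n` from below and gives `u m ≥ 1`. Hence `f a = (a + 1 - m) / (a + 1)`.
-/

open Filter Topology

namespace ConditionedWalk

-- Codes `0, 1, 2` are the jumps `(1, -1)`, `(-1, 0)`, `(0, 1)`. The truncated `a - 1` at `a = 0`
-- is harmless: that jump has probability `0` there.
def stepFst (a : ℕ) : Fin 3 → ℕ := ![a + 1, a - 1, a]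

def step (p : ℕ × ℤ) (i : Fin 3) : ℕ × ℤ := (stepFst p.1 i, p.2 - ![1, 0, -1] i)

noncomputable def jumpProb (a : ℕ) : Fin 3 → ℝ :=
  ![((a : ℝ) + 2) / (3 * ((a : ℝ) + 1)), (a : ℝ) / (3 * ((a : ℝ) + 1)), 1 / 3]

lemma transProb_step (p : ℕ × ℤ) (i : Fin 3) : transProb p (step p i) = jumpProb p.1 i := by
  obtain ⟨a, b⟩ := p
  fin_cases i
  · simp [transProb, step, stepFst, jumpProb]
  · rcases Nat.eq_zero_or_pos a with rfl | ha
    · simp [transProb, step, stepFst, jumpProb]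
    · simp [transProb, step, stepFst, jumpProb, Nat.sub_add_cancel ha,
        show a - 1 ≠ a + 1 by omega]
  · simp [transProb, step, stepFst, jumpProb]

lemma step_injective (p : ℕ × ℤ) : Function.Injective (step p) := by
  intro i j h
  fin_cases i <;> fin_cases j <;> simp_all [step, stepFst]

lemma jumpProb_nonneg (a : ℕ) (i : Fin 3) : 0 ≤ jumpProb a i := by
  fin_cases i <;> simp [jumpProb] <;> positivity

lemma sum_jumpProb (a : ℕ) : ∑ i, jumpProb a i = 1 := by
  simp only [Fin.sum_univ_three, jumpProb, Matrix.cons_val_zero, Matrix.cons_val_one,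
    Matrix.cons_val_two, Matrix.head_cons, Matrix.tail_cons]
  field_simp
  ring

noncomputable def killedStep (m : ℕ) (f : ℕ → ℝ) (a : ℕ) : ℝ :=
  ∑ i, if m ≤ stepFst a i then jumpProb a i * f (stepFst a i) else 0

lemma killedStep_mono (m : ℕ) : Monotone (killedStep m) := fun f g hfg a =>
  Finset.sum_le_sum fun i _ => by
    split_ifs
    · exact mul_le_mul_of_nonneg_left (hfg _) (jumpProb_nonneg a i)
    · rfl

lemma killedStep_nonneg (m : ℕ) {f : ℕ → ℝ} (hf : ∀ a, m ≤ a → 0 ≤ f a) (a : ℕ) :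
    0 ≤ killedStep m f a :=
  Finset.sum_nonneg fun i _ => by
    split_ifs with h
    · exact mul_nonneg (jumpProb_nonneg a i) (hf _ h)
    · rfl

lemma killedStep_one_le (m : ℕ) : killedStep m 1 ≤ 1 := fun a =>
  calc killedStep m 1 a ≤ ∑ i, jumpProb a i :=
        Finset.sum_le_sum fun i _ => by split_ifs <;> simp [jumpProb_nonneg]
    _ = 1 := sum_jumpProb a

lemma killedStep_zero_one : killedStep 0 1 = 1 := by
  ext a
  simp [killedStep, sum_jumpProb]

lemma killedStep_eq (m : ℕ) (f : ℕ → ℝ) {a : ℕ} (ha : m ≤ a) :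
    3 * ((a + 1) * killedStep m f a) =
      (((a + 1 : ℕ) : ℝ) + 1) * f (a + 1) +
        (if m < a then (((a - 1 : ℕ) : ℝ) + 1) * f (a - 1) else 0) + (a + 1) * f a := by
  have : (a : ℝ) + 1 ≠ 0 := by positivity
  have hup : m ≤ a + 1 := by omega
  simp only [killedStep, Fin.sum_univ_three, stepFst, jumpProb, Matrix.cons_val_zero,
    Matrix.cons_val_one, Matrix.cons_val_two, Matrix.head_cons, Matrix.tail_cons, hup, ha,
    if_true]
  rcases ha.lt_or_eq with hlt | rfl
  · simp only [show m ≤ a - 1 by omega, hlt, if_true]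
    rw [Nat.cast_sub (by omega : 1 ≤ a)]
    push_cast
    field_simp
    ring
  · simp only [lt_irrefl, if_false]
    rcases Nat.eq_zero_or_pos m with rfl | hm
    · simp
      field_simp
      ring
    · simp only [show ¬m ≤ m - 1 by omega, if_false]
      push_cast
      field_simp
      ring

noncomputable def survivalProb (m n : ℕ) : ℕ → ℝ := (killedStep m)^[n] 1

lemma survivalProb_succ (m n : ℕ) :
    survivalProb m (n + 1) = killedStep m (survivalProb m n) :=
  Function.iterate_succ_apply' _ _ _

lemma survivalProb_zero_left (n : ℕ) : survivalProb 0 n = 1 :=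
  Function.iterate_fixed killedStep_zero_one n

lemma survivalProb_antitone (m a : ℕ) : Antitone fun n => survivalProb m n a := fun _ _ hij =>
  (killedStep_mono m).antitone_iterate_of_map_le (killedStep_one_le m) hij a

lemma survivalProb_nonneg (m n a : ℕ) : 0 ≤ survivalProb m n a := by
  induction n generalizing a with
  | zero => exact zero_le_one
  | succ n ih => exact survivalProb_succ m n ▸ killedStep_nonneg m (fun b _ => ih b) a

noncomputable def survivalLimit (m a : ℕ) : ℝ := ⨅ n, survivalProb m n a

lemma tendsto_survivalProb (m a : ℕ) :
    Tendsto (fun n => survivalProb m n a) atTop (𝓝 (survivalLimit m a)) :=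
  tendsto_atTop_ciInf (survivalProb_antitone m a)
    ⟨0, Set.forall_mem_range.2 fun n => survivalProb_nonneg m n a⟩

lemma survivalLimit_le_one (m a : ℕ) : survivalLimit m a ≤ 1 :=
  ciInf_le ⟨0, Set.forall_mem_range.2 fun n => survivalProb_nonneg m n a⟩ 0

lemma killedStep_survivalLimit (m : ℕ) : killedStep m (survivalLimit m) = survivalLimit m := by
  ext a
  refine tendsto_nhds_unique ?_ ((tendsto_survivalProb m a).comp (tendsto_add_atTop_nat 1))
  simp only [Function.comp_def, survivalProb_succ, killedStep]
  refine tendsto_finsetSum _ fun i _ => ?_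
  split_ifs
  · exact (tendsto_survivalProb m _).const_mul _
  · exact tendsto_const_nhds

noncomputable def survivalRatio (m a : ℕ) : ℝ := ((a : ℝ) + 1 - m) / (a + 1)

lemma survivalRatio_le_one (m : ℕ) : survivalRatio m ≤ 1 := fun a => by
  rw [Pi.one_apply, survivalRatio, div_le_one (by positivity)]
  linarith [(m.cast_nonneg : (0 : ℝ) ≤ m)]

lemma survivalRatio_nonneg {m a : ℕ} (ha : m ≤ a) : 0 ≤ survivalRatio m a := by
  have : (m : ℝ) ≤ a := by exact_mod_cast ha
  unfold survivalRatio
  exact div_nonneg (by linarith) (by positivity)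

lemma mul_survivalRatio (m a : ℕ) : ((a : ℝ) + 1) * survivalRatio m a = a + 1 - m :=
  mul_div_cancel₀ _ (by positivity)

lemma killedStep_survivalRatio {m a : ℕ} (ha : m ≤ a) :
    killedStep m (survivalRatio m) a = survivalRatio m a := by
  have h := killedStep_eq m (survivalRatio m) ha
  simp only [mul_survivalRatio] at h
  refine mul_left_cancel₀ (show (a : ℝ) + 1 ≠ 0 by positivity) ?_
  rw [mul_survivalRatio]
  split_ifs at h with hlt
  · rw [Nat.cast_sub (by omega : 1 ≤ a)] at h
    push_cast at h
    linarith
  · have : (m : ℝ) = a := by exact_mod_cast (by omega : m = a)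
    push_cast at h
    linarith

lemma survivalRatio_le_killedStep (m : ℕ) : survivalRatio m ≤ killedStep m (survivalRatio m) :=
  fun a => by
    rcases le_or_gt m a with ha | ha
    · exact (killedStep_survivalRatio ha).ge
    · calc survivalRatio m a ≤ 0 := by
            unfold survivalRatio
            have : (a : ℝ) + 1 ≤ m := by exact_mod_cast ha
            exact div_nonpos_of_nonpos_of_nonneg (by linarith) (by positivity)
        _ ≤ _ := killedStep_nonneg m (fun b hb => survivalRatio_nonneg hb) a

lemma survivalRatio_le_survivalLimit (m a : ℕ) : survivalRatio m a ≤ survivalLimit m a :=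
  le_ciInf fun n =>
    calc survivalRatio m a ≤ (killedStep m)^[n] (survivalRatio m) a :=
          (killedStep_mono m).monotone_iterate_of_le_map (survivalRatio_le_killedStep m)
            (Nat.zero_le n) a
      _ ≤ survivalProb m n a := (killedStep_mono m).iterate n (survivalRatio_le_one m) a

lemma add_one_mul_of_killedStep_eq {m : ℕ} {f : ℕ → ℝ}
    (hfix : ∀ a, m ≤ a → killedStep m f a = f a) (k : ℕ) :
    (((m + k : ℕ) : ℝ) + 1) * f (m + k) = (k + 1) * ((m + 1) * f m) := by
  set u : ℕ → ℝ := fun k => (((m + k : ℕ) : ℝ) + 1) * f (m + k) with hu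
  have hstart : u 1 = 2 * u 0 := by
    have h := killedStep_eq m f le_rfl
    rw [hfix m le_rfl, if_neg (lt_irrefl m)] at h
    simp only [hu, Nat.add_zero]
    linarith
  have hrec : ∀ k, u (k + 2) = 2 * u (k + 1) - u k := by
    intro k
    have h := killedStep_eq m f (Nat.le_add_right m (k + 1))
    rw [hfix _ (Nat.le_add_right m (k + 1)), if_pos (by omega),
      show m + (k + 1) - 1 = m + k by omega, show m + (k + 1) + 1 = m + (k + 2) by omega] at h
    simp only [hu]
    push_cast at h ⊢
    linarith
  have hlin : ∀ k, u k = (k + 1) * u 0 ∧ u (k + 1) = (k + 2) * u 0 := by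
    intro k
    induction k with
    | zero => exact ⟨by ring, by rw [hstart]; ring⟩
    | succ k ih =>
      refine ⟨by rw [ih.2]; push_cast; ring, ?_⟩
      rw [hrec, ih.1, ih.2]
      push_cast
      ring
  simpa only [hu, Nat.add_zero, Nat.cast_add, Nat.cast_zero, add_zero] using (hlin k).1

lemma eq_survivalRatio_of_killedStep_eq {m : ℕ} {f : ℕ → ℝ}
    (hfix : ∀ a, m ≤ a → killedStep m f a = f a) (hle : ∀ a, m ≤ a → f a ≤ 1)
    (hm : survivalRatio m m ≤ f m) {a : ℕ} (ha : m ≤ a) : f a = survivalRatio m a := by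
  have hlin := add_one_mul_of_killedStep_eq hfix
  have hbound : ∀ k : ℕ, (k + 1) * ((m + 1) * f m) ≤ m + k + 1 := fun k => by
    have := hle (m + k) (Nat.le_add_right m k)
    rw [← hlin]
    push_cast
    nlinarith
  have hu0 : (m + 1) * f m = 1 := by
    refine le_antisymm ?_ ?_
    · by_contra! h
      obtain ⟨k, hk⟩ := exists_nat_gt (m / ((m + 1) * f m - 1))
      rw [div_lt_iff₀ (sub_pos.2 h)] at hk
      nlinarith [hbound k]
    · simpa only [mul_survivalRatio, add_sub_cancel_left] using
        mul_le_mul_of_nonneg_left hm (by positivity : (0 : ℝ) ≤ m + 1)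
  obtain ⟨k, rfl⟩ := Nat.exists_eq_add_of_le ha
  refine mul_left_cancel₀ (show ((m + k : ℕ) : ℝ) + 1 ≠ 0 by positivity) ?_
  rw [mul_survivalRatio, hlin, hu0]
  push_cast
  ring

lemma survivalLimit_eq {m a : ℕ} (ha : m ≤ a) : survivalLimit m a = survivalRatio m a :=
  eq_survivalRatio_of_killedStep_eq (fun b _ => congrFun (killedStep_survivalLimit m) b)
    (fun b _ => survivalLimit_le_one m b) (survivalRatio_le_survivalLimit m m) ha

-- The path coded by `d`; it stays put after the `n` coded steps.
def codePath (p : ℕ × ℤ) : {n : ℕ} → (Fin n → Fin 3) → ℕ → ℕ × ℤ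
  | 0, _, _ => p
  | _ + 1, _, 0 => p
  | _ + 1, d, j + 1 => codePath (step p (d 0)) (Fin.tail d) j

@[simp] lemma codePath_zero (p : ℕ × ℤ) {n : ℕ} (d : Fin n → Fin 3) :
    codePath p d 0 = p := by
  cases n <;> rfl

lemma codePath_succ (p : ℕ × ℤ) {n : ℕ} (d : Fin (n + 1) → Fin 3) (j : ℕ) :
    codePath p d (j + 1) = codePath (step p (d 0)) (Fin.tail d) j := rfl

@[simp] lemma codePath_cons_succ (p : ℕ × ℤ) {n : ℕ} (i : Fin 3) (d : Fin n → Fin 3)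
    (j : ℕ) :
    codePath p (Fin.cons i d : Fin (n + 1) → Fin 3) (j + 1) = codePath (step p i) d j := by
  rw [codePath_succ, Fin.cons_zero, Fin.tail_cons]

lemma eq_of_codePath_eq {p : ℕ × ℤ} {n : ℕ} {d d' : Fin n → Fin 3}
    (h : ∀ j ≤ n, codePath p d j = codePath p d' j) : d = d' := by
  induction n generalizing p with
  | zero => exact Subsingleton.elim d d'
  | succ n ih =>
    have h0 : d 0 = d' 0 := step_injective p <| by
      simpa only [codePath_succ, codePath_zero] using h 1 (by omega)
    have htail : Fin.tail d = Fin.tail d' := ih fun j hj => by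
      simpa only [codePath_succ, h0] using h (j + 1) (by omega)
    rw [← Fin.cons_self_tail d, ← Fin.cons_self_tail d', h0, htail]

noncomputable def pathWeight (p : ℕ × ℤ) {n : ℕ} (d : Fin n → Fin 3) : ℝ :=
  ∏ j ∈ Finset.range n, transProb (codePath p d j) (codePath p d (j + 1))

lemma pathWeight_cons (p : ℕ × ℤ) {n : ℕ} (i : Fin 3) (d : Fin n → Fin 3) :
    pathWeight p (Fin.cons i d : Fin (n + 1) → Fin 3) =
      jumpProb p.1 i * pathWeight (step p i) d := by
  simp only [pathWeight, Finset.prod_range_succ', codePath_cons_succ, codePath_zero,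
    transProb_step]
  ring

def StaysAbove (m : ℕ) (p : ℕ × ℤ) {n : ℕ} (d : Fin n → Fin 3) : Prop :=
  ∀ j ≤ n, m ≤ (codePath p d j).1

instance (m : ℕ) (p : ℕ × ℤ) {n : ℕ} (d : Fin n → Fin 3) :
    Decidable (StaysAbove m p d) :=
  inferInstanceAs (Decidable (∀ j ≤ n, _))

lemma staysAbove_cons {m : ℕ} {p : ℕ × ℤ} {n : ℕ} {i : Fin 3} {d : Fin n → Fin 3} :
    StaysAbove m p (Fin.cons i d : Fin (n + 1) → Fin 3) ↔
      m ≤ p.1 ∧ StaysAbove m (step p i) d := by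
  refine ⟨fun h => ⟨by simpa using h 0 (Nat.zero_le _), fun j hj => ?_⟩,
    fun ⟨hp, h⟩ j hj => ?_⟩
  · simpa using h (j + 1) (by omega)
  · cases j with
    | zero => simpa using hp
    | succ j => simpa using h j (by omega)

lemma sum_pathWeight_staysAbove (m n : ℕ) {p : ℕ × ℤ} (hp : m ≤ p.1) :
    ∑ d : Fin n → Fin 3, (if StaysAbove m p d then pathWeight p d else 0) =
      survivalProb m n p.1 := by
  induction n generalizing p with
  | zero =>
    rw [Fintype.sum_unique, if_pos]
    · simp [pathWeight, survivalProb]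
    · intro j hj
      simpa [Nat.le_zero.1 hj] using hp
  | succ n ih =>
    rw [← (Fin.consEquiv fun _ => Fin 3).sum_comp, Fintype.sum_prod_type, survivalProb_succ,
      killedStep]
    refine Finset.sum_congr rfl fun i _ => ?_
    simp only [Fin.consEquiv, Equiv.coe_fn_mk, staysAbove_cons, hp, true_and, pathWeight_cons,
      ← mul_ite_zero, ← Finset.mul_sum]
    split_ifs with hi
    · rw [ih hi]
      rfl
    · rw [Finset.sum_eq_zero fun d _ => if_neg fun h => hi ?_, mul_zero]
      simpa [step] using h 0 (Nat.zero_le _)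

lemma sum_pathWeight (p : ℕ × ℤ) (n : ℕ) : ∑ d : Fin n → Fin 3, pathWeight p d = 1 := by
  simpa [StaysAbove, survivalProb_zero_left] using sum_pathWeight_staysAbove 0 n (Nat.zero_le p.1)

section Law

variable {Ω : Type*} [MeasurableSpace Ω] {P : Measure Ω} {Z : ℕ → Ω → ℕ × ℤ}

def pathCylinder (Z : ℕ → Ω → ℕ × ℤ) (n : ℕ) (v : ℕ → ℕ × ℤ) : Set Ω :=
  {ω | ∀ j ≤ n, Z j ω = v j}

def HasPathLaw (P : Measure Ω) (Z : ℕ → Ω → ℕ × ℤ) (p : ℕ × ℤ) : Prop :=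
  ∀ (n : ℕ) (v : ℕ → ℕ × ℤ), v 0 = p →
    (P (pathCylinder Z n v)).toReal = ∏ j ∈ Finset.range n, transProb (v j) (v (j + 1))

lemma measurableSet_pathCylinder (hZ : ∀ n, Measurable (Z n)) (n : ℕ) (v : ℕ → ℕ × ℤ) :
    MeasurableSet (pathCylinder Z n v) := by
  simp only [pathCylinder, Set.ofPred_forall]
  exact .iInter fun j => .iInter fun _ => hZ j (measurableSet_singleton (v j))

lemma toReal_measure_biUnion_pathCylinder [IsFiniteMeasure P] (hZ : ∀ n, Measurable (Z n))
    {p : ℕ × ℤ} (hlaw : HasPathLaw P Z p) {n : ℕ} (S : Finset (Fin n → Fin 3)) :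
    (P (⋃ d ∈ S, pathCylinder Z n (codePath p d))).toReal = ∑ d ∈ S, pathWeight p d := by
  have hdisj :
      (S : Set (Fin n → Fin 3)).PairwiseDisjoint fun d => pathCylinder Z n (codePath p d) :=
    fun d _ d' _ hne => Set.disjoint_left.2 fun ω hω hω' =>
      hne (eq_of_codePath_eq fun j hj => (hω j hj).symm.trans (hω' j hj))
  rw [measure_biUnion_finset hdisj fun d _ => measurableSet_pathCylinder hZ n _,
    ENNReal.toReal_sum fun d _ => measure_ne_top P _]
  exact Finset.sum_congr rfl fun d _ => hlaw n _ (codePath_zero p d)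

lemma toReal_measure_staysAbove [IsProbabilityMeasure P] (hZ : ∀ n, Measurable (Z n))
    {p : ℕ × ℤ} (hlaw : HasPathLaw P Z p) {m : ℕ} (hm : m ≤ p.1) (n : ℕ) :
    (P {ω | ∀ j ≤ n, m ≤ (Z j ω).1}).toReal = survivalProb m n p.1 := by
  set U := ⋃ d ∈ (Finset.univ : Finset (Fin n → Fin 3)), pathCylinder Z n (codePath p d)
  have hU : P Uᶜ = 0 := by
    refine (prob_compl_eq_zero_iff (Finset.univ.measurableSet_biUnion fun d _ =>
      measurableSet_pathCylinder hZ n _)).2 ?_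
    rw [← ENNReal.toReal_eq_one_iff, toReal_measure_biUnion_pathCylinder hZ hlaw,
      sum_pathWeight]
  have hinter : {ω | ∀ j ≤ n, m ≤ (Z j ω).1} ∩ U =
      ⋃ d ∈ Finset.univ.filter (StaysAbove m p (n := n)), pathCylinder Z n (codePath p d) := by
    ext ω
    simp only [U, Set.mem_inter_iff, Set.mem_iUnion, Finset.mem_filter, Finset.mem_univ,
      true_and, exists_prop]
    constructor
    · rintro ⟨hω, d, hd⟩
      exact ⟨d, fun j hj => hd j hj ▸ hω j hj, hd⟩
    · rintro ⟨d, hstay, hd⟩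
      exact ⟨fun j hj => (hd j hj).symm ▸ hstay j hj, d, hd⟩
  rw [← measure_inter_conull hU, hinter, toReal_measure_biUnion_pathCylinder hZ hlaw,
    Finset.sum_filter, sum_pathWeight_staysAbove m n hm]

lemma toReal_measure_staysAbove_forever [IsProbabilityMeasure P] (hZ : ∀ n, Measurable (Z n))
    {p : ℕ × ℤ} (hlaw : HasPathLaw P Z p) {m : ℕ} (hm : m ≤ p.1) :
    (P {ω | ∀ j, m ≤ (Z j ω).1}).toReal = survivalLimit m p.1 := by
  set E : ℕ → Set Ω := fun n => {ω | ∀ j ≤ n, m ≤ (Z j ω).1}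
  have hE : {ω | ∀ j, m ≤ (Z j ω).1} = ⋂ n, E n := by
    ext ω
    simp only [E, Set.mem_iInter, Set.mem_ofPred_eq]
    exact ⟨fun h n j _ => h j, fun h j => h j j le_rfl⟩
  have hmeas : ∀ n, MeasurableSet (E n) := fun n => by
    simp only [E, Set.ofPred_forall]
    exact .iInter fun j => .iInter fun _ =>
      hZ j (.of_discrete : MeasurableSet {q : ℕ × ℤ | m ≤ q.1})
  have hlim := tendsto_measure_iInter_atTop (μ := P) (fun n => (hmeas n).nullMeasurableSet)
    (fun a b hab ω hω j hj => hω j (hj.trans hab)) ⟨0, measure_ne_top P _⟩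
  rw [hE]
  refine tendsto_nhds_unique ?_ (tendsto_survivalProb m p.1)
  simpa only [Function.comp_def, toReal_measure_staysAbove hZ hlaw hm, E] using
    (ENNReal.tendsto_toReal (measure_ne_top P _)).comp hlim

end Law

end ConditionedWalk

open ConditionedWalk

/-- If the chain `Ẑ = (L̂, R̂)` with the above transition probabilities is started from
`(x, y)`, then for every `0 ≤ s ≤ x`,
`ℙ[L̂ j ≥ x - s for all j ≥ 0] = (s + 1)/(x + 1)`. -/
theorem stmt_3
    {Ω : Type*} [MeasurableSpace Ω] (P : Measure Ω) [IsProbabilityMeasure P]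
    (Zhat : ℕ → Ω → ℕ × ℤ)
    (hMeas : ∀ n, Measurable (Zhat n))
    (x : ℕ) (y : ℤ)
    (hPath : ∀ (n : ℕ) (p : ℕ → ℕ × ℤ), p 0 = (x, y) →
      (P {ω | ∀ j ≤ n, Zhat j ω = p j}).toReal =
        ∏ j ∈ Finset.range n, transProb (p j) (p (j + 1)))
    (s : ℕ) (hs : s ≤ x) :
    (P {ω | ∀ j : ℕ, x - s ≤ (Zhat j ω).1}).toReal = ((s : ℝ) + 1) / ((x : ℝ) + 1) := by
  have hm : x - s ≤ x := Nat.sub_le x s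
  rw [toReal_measure_staysAbove_forever (p := (x, y)) hMeas hPath hm, survivalLimit_eq hm,
    survivalRatio, Nat.cast_sub hs]
  ring
end

section
/- Suppose (f, g) satisfies the LDP recursive equation. Then 0 < f(0) < 1; in particular, a random variable with probability mass function f is not almost surely constant and takes the value 0 with positive probability. -/
/-!
Only the equation at `y = -1` is needed. Since its series term is nonnegative, it gives
`g (-x - 1) ≤ f x * (3 * g (-1) - f (-1))` for every `x`. If `f 0 = 0`, the case `x = 0` forces
`g (-1) = 0`, and then the bound is nonpositive for every `x`. If `f 0 ≥ 1`, then `f` vanishes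
off `0`, so the bound kills `g` off `-1`, while at `x = 0` the series vanishes and the equation
reads `3 f(0) g(-1) = g(-1)`. In both cases `g ≡ 0`, contradicting `∑ g = 1`.
-/

namespace LDPRecursion

def RecursionAtNegOne (f g : ℤ → ℝ) : Prop :=
  ∀ x : ℤ, 3 * f x * g (-1) =
    f x * f (-1) + (∑' j : ℕ, f ((j : ℤ) + x + 1) * f (-(j : ℤ))) + g (-x - 1)

variable {f g : ℤ → ℝ}

theorem neg_sub_one_le (hf0 : ∀ x, 0 ≤ f x) (hrec : RecursionAtNegOne f g) (x : ℤ) :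
    g (-x - 1) ≤ f x * (3 * g (-1) - f (-1)) := by
  have hseries : 0 ≤ ∑' j : ℕ, f ((j : ℤ) + x + 1) * f (-(j : ℤ)) :=
    tsum_nonneg fun j => mul_nonneg (hf0 _) (hf0 _)
  linarith [hrec x]

theorem not_forall_neg_sub_one_nonpos (hgsum : HasSum g 1) : ¬ ∀ x, g (-x - 1) ≤ 0 := by
  intro h
  have hg : ∀ y, g y ≤ 0 := fun y => by simpa using h (-y - 1)
  linarith [hgsum.nonpos hg]

theorem apply_zero_pos (hf0 : ∀ x, 0 ≤ f x) (hg0 : ∀ y, 0 ≤ g y) (hgsum : HasSum g 1)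
    (hrec : RecursionAtNegOne f g) : 0 < f 0 := by
  by_contra! hle
  have hf00 : f 0 = 0 := le_antisymm hle (hf0 0)
  have hg1 : g (-1) = 0 := by
    have := neg_sub_one_le hf0 hrec 0
    rw [hf00] at this
    exact le_antisymm (by simpa using this) (hg0 _)
  refine not_forall_neg_sub_one_nonpos hgsum fun x => ?_
  have := neg_sub_one_le hf0 hrec x
  rw [hg1] at this
  nlinarith [hf0 x, hf0 (-1)]

theorem apply_zero_lt_one (hf0 : ∀ x, 0 ≤ f x) (hfsum : HasSum f 1) (hgsum : HasSum g 1)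
    (hrec : RecursionAtNegOne f g) : f 0 < 1 := by
  by_contra! hge
  have hvanish : ∀ x, x ≠ 0 → f x = 0 := fun x hx =>
    le_antisymm (not_lt.mp fun hpos =>
      (lt_hasSum hfsum 0 (fun j _ => hf0 j) x hx hpos).not_ge hge) (hf0 x)
  have hseries : ∑' j : ℕ, f ((j : ℤ) + 0 + 1) * f (-(j : ℤ)) = 0 := by
    have hterm : ∀ j : ℕ, f ((j : ℤ) + 0 + 1) * f (-(j : ℤ)) = 0 := fun j => by
      rw [hvanish _ (by omega), zero_mul]
    simp only [hterm, tsum_zero]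
  have hg1 : g (-1) = 0 := by
    have h0 := hrec 0
    rw [hvanish (-1) (by norm_num), hseries] at h0
    norm_num at h0
    nlinarith
  refine not_forall_neg_sub_one_nonpos hgsum fun x => ?_
  rcases eq_or_ne x 0 with rfl | hx
  · simpa using hg1.le
  · simpa [hvanish x hx] using neg_sub_one_le hf0 hrec x

end LDPRecursion

open LDPRecursion in
theorem stmt_6_general
    (f g : ℤ → ℝ)
    (hf0 : ∀ x, 0 ≤ f x) (hg0 : ∀ y, 0 ≤ g y)
    (hfsum : HasSum f 1) (hgsum : HasSum g 1)
    (hrec : ∀ x y : ℤ, y ≤ -1 →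
      3 * f x * g y =
        f x * f y + f x * (∑ j ∈ Finset.Icc (1 : ℤ) (-y - 1), g (y + j) * g (-j)) +
          (if y = -1 then (∑' j : ℕ, f ((j : ℤ) + x + 1) * f (-(j : ℤ))) + g (-x - 1)
            else 0)) :
    0 < f 0 ∧ f 0 < 1 := by
  have hrec₁ : RecursionAtNegOne f g := fun x => by
    have h := hrec x (-1) le_rfl
    rw [if_pos rfl, Finset.Icc_eq_empty (by norm_num), Finset.sum_empty] at h
    linarith
  exact ⟨apply_zero_pos hf0 hg0 hgsum hrec₁, apply_zero_lt_one hf0 hfsum hgsum hrec₁⟩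

/-- Suppose the probability mass functions `f` (symmetric on `ℤ`) and `g`
(supported on the negative integers) satisfy the LDP recursive equation:
for all `x ∈ ℤ` and `y ≤ -1`,
`3 f(x) g(y) = f(x) f(y) + f(x) Σ_{j=1}^{-y-1} g(y+j) g(-j)
  + 1_{y = -1} (Σ_{j ≥ 0} f(j+x+1) f(-j) + g(-x-1))`.
Then `0 < f 0 < 1`: a random variable with pmf `f` is not a.s. constant and takes
the value `0` with positive probability. -/
theorem stmt_6
    (f g : ℤ → ℝ)
    (hf0 : ∀ x, 0 ≤ f x) (hg0 : ∀ y, 0 ≤ g y)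
    (hfsum : HasSum f 1) (hgsum : HasSum g 1)
    (hfsymm : ∀ x, f (-x) = f x)
    (hgsupp : ∀ y : ℤ, 0 ≤ y → g y = 0)
    (hrec : ∀ x y : ℤ, y ≤ -1 →
      3 * f x * g y =
        f x * f y + f x * (∑ j ∈ Finset.Icc (1 : ℤ) (-y - 1), g (y + j) * g (-j)) +
          (if y = -1 then (∑' j : ℕ, f ((j : ℤ) + x + 1) * f (-(j : ℤ))) + g (-x - 1)
            else 0)) :
    0 < f 0 ∧ f 0 < 1 :=
  stmt_6_general f g hf0 hg0 hfsum hgsum hrec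
end

section
/- Suppose (f, g) satisfies the LDP recursive equation. Set κ = 3 + f(0), c(t) = f(0) − (κ/2)·e^{it}, and F̂⁻(t) = F⁻(t) + c(t). Then for every t ∈ ℝ one has Ḡ(t) = −F(t)·F̂⁻(t), and F̂⁻(t) satisfies the quadratic equation F(t)²·F̂⁻(t)² + (3F(t) − 1)·F̂⁻(t) + F(t) = 0. -/
/-!
Put `z = exp (I t)`. Taking `y = -1` in the recursion gives, for every `x`,
`g (-x-1) = c₀ f x - A x` with `c₀ = 3 g (-1) - f (-1)` and `A x = ∑ⱼ f (j+x+1) f (-j)`;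
summing over `x` and using the symmetry of `f` (so that `∑_{n ≥ 0} f n = (1 + f 0)/2`)
identifies `c₀ = κ/2`. Multiplying by `z^(x+1)` and summing, `∑ₓ A x z^(x+1)` factors as
`F (f 0 + F⁻)`, which gives `Ḡ = -F F̂⁻`. For `y ≤ -2` the recursion, divided by some
`f x ≠ 0`, is a convolution identity for `g` whose generating function reads
`3 Ḡ = F - F̂⁻ + Ḡ²`; substituting `Ḡ = -F F̂⁻` gives the quadratic.
-/

open Complex Finset

theorem Function.Even.hasSum_nat {f : ℤ → ℝ} {s : ℝ} (he : f.Even) (hf : HasSum f s) :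
    HasSum (fun n : ℕ => f n) ((s + f 0) / 2) :=
  (hf.nat_add_neg.div_const 2).congr_fun fun n => by rw [he]; ring

theorem hasSum_tsum_mul_shift {R : Type*} [NormedRing R] [CompleteSpace R] {a : ℤ → R}
    {b : ℕ → R} (ha : Summable fun x => ‖a x‖) (hb : Summable fun j => ‖b j‖) :
    HasSum (fun x : ℤ => ∑' j : ℕ, a (j + x + 1) * b j) ((∑' x, a x) * ∑' j, b j) := by
  let e : ℤ × ℕ ≃ ℤ × ℕ :=
    { toFun p := (p.2 + p.1 + 1, p.2)
      invFun p := (p.1 - p.2 - 1, p.2)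
      left_inv p := by ext <;> simp only; ring
      right_inv p := by ext <;> simp only; ring }
  have hprod : HasSum (fun p : ℤ × ℕ => a p.1 * b p.2) ((∑' x, a x) * ∑' j, b j) := by
    rw [tsum_mul_tsum_of_summable_norm ha hb]
    exact (summable_mul_of_summable_norm ha hb).hasSum
  have hsheared := e.hasSum_iff.2 hprod
  exact hsheared.prod_fiberwise fun x => (hsheared.summable.prod_factor x).hasSum

theorem hasSum_sum_antidiagonal_mul {R : Type*} [NormedRing R] [CompleteSpace R] {a b : ℕ → R}
    (ha : Summable fun n => ‖a n‖) (hb : Summable fun n => ‖b n‖) :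
    HasSum (fun n => ∑ p ∈ antidiagonal n, a p.1 * b p.2) ((∑' n, a n) * ∑' n, b n) := by
  rw [tsum_mul_tsum_eq_tsum_sum_antidiagonal_of_summable_norm ha hb]
  exact (summable_norm_sum_mul_antidiagonal_of_summable_norm ha hb).of_norm.hasSum

theorem sum_Icc_eq_sum_antidiagonal {R : Type*} [Semiring R] (u : ℤ → R) (n : ℕ) :
    ∑ j ∈ Icc (1 : ℤ) (n + 1), u (-(n + 1) - 1 + j) * u (-j) =
      ∑ p ∈ antidiagonal n, u (-p.1 - 1) * u (-p.2 - 1) := by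
  rw [Nat.sum_antidiagonal_eq_sum_range_succ_mk]
  symm
  refine sum_nbij' (fun k => (n : ℤ) + 1 - k) (fun j => (n + 1 - j).toNat) ?_ ?_ ?_ ?_ ?_
  all_goals intro k hk; simp only [mem_range, mem_Icc] at hk
  · simp only [mem_Icc]; omega
  · simp only [mem_range]; omega
  · omega
  · omega
  · have hkn : k ≤ n := by omega
    congr 2 <;> push_cast [hkn] <;> ring

theorem summable_norm_ofReal_mul {ι : Type*} {a : ι → ℝ} (ha : Summable a) {w : ι → ℂ}
    (hw : ∀ i, ‖w i‖ = 1) : Summable fun i => ‖(a i : ℂ) * w i‖ := by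
  simpa [hw] using ha.abs

-- With `z = exp (I t)` these are the paper's `F(t)`, `F⁻(t)`, `Ḡ(t)` and `F̂⁻(t)`.
noncomputable def genFun (f : ℤ → ℝ) (z : ℂ) : ℂ := ∑' x : ℤ, (f x : ℂ) * z ^ x

noncomputable def genFunNeg (f : ℤ → ℝ) (z : ℂ) : ℂ :=
  ∑' k : ℕ, (f (-k - 1) : ℂ) * z ^ (-(k : ℤ) - 1)

noncomputable def genFunBar (g : ℤ → ℝ) (z : ℂ) : ℂ := ∑' k : ℕ, (g (-k - 1) : ℂ) * z ^ (k + 1)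

noncomputable def genFunNegHat (f : ℤ → ℝ) (z : ℂ) : ℂ :=
  genFunNeg f z + f 0 - (3 + f 0) / 2 * z

section GeneratingFunctions

variable {f g : ℤ → ℝ} {z : ℂ}

theorem Summable.comp_neg_sub_one (hf : Summable f) : Summable fun k : ℕ => f (-k - 1) :=
  hf.comp_injective fun _ _ h => by simpa using h

theorem hasSum_genFun (hf : Summable f) (hz : ‖z‖ = 1) :
    HasSum (fun x : ℤ => (f x : ℂ) * z ^ x) (genFun f z) :=
  (summable_norm_ofReal_mul hf fun x => by simp [hz]).of_norm.hasSum

theorem hasSum_genFunNeg (hf : Summable f) (hz : ‖z‖ = 1) :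
    HasSum (fun k : ℕ => (f (-k - 1) : ℂ) * z ^ (-(k : ℤ) - 1)) (genFunNeg f z) :=
  (summable_norm_ofReal_mul hf.comp_neg_sub_one fun k => by simp [hz]).of_norm.hasSum

theorem summable_norm_genFunBar (hg : Summable g) (hz : ‖z‖ = 1) :
    Summable fun k : ℕ => ‖(g (-k - 1) : ℂ) * z ^ (k + 1)‖ :=
  summable_norm_ofReal_mul hg.comp_neg_sub_one fun k => by simp [hz]

theorem hasSum_genFunBar (hg : Summable g) (hz : ‖z‖ = 1) :
    HasSum (fun k : ℕ => (g (-k - 1) : ℂ) * z ^ (k + 1)) (genFunBar g z) :=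
  (summable_norm_genFunBar hg hz).of_norm.hasSum

theorem hasSum_genFunBar_int (hg : Summable g) (hgsupp : ∀ y : ℤ, 0 ≤ y → g y = 0)
    (hz : ‖z‖ = 1) : HasSum (fun x : ℤ => (g (-x - 1) : ℂ) * z ^ (x + 1)) (genFunBar g z) := by
  have hnat : HasSum (fun n : ℕ => (g (-(n : ℤ) - 1) : ℂ) * z ^ ((n : ℤ) + 1)) (genFunBar g z) :=
    (hasSum_genFunBar hg hz).congr_fun fun n => by rw [← zpow_natCast]; push_cast; rfl
  have hneg : HasSum (fun n : ℕ => (g (-(-((n : ℤ) + 1)) - 1) : ℂ) * z ^ (-((n : ℤ) + 1) + 1)) 0 :=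
    hasSum_zero.congr_fun fun n => by rw [hgsupp _ (by omega)]; simp
  simpa using HasSum.of_nat_of_neg_add_one (f := fun x : ℤ => (g (-x - 1) : ℂ) * z ^ (x + 1))
    hnat hneg

theorem hasSum_nonpos_genFun (hf : Summable f) (hz : ‖z‖ = 1) :
    HasSum (fun j : ℕ => (f (-j) : ℂ) * z ^ (-(j : ℤ))) (f 0 + genFunNeg f z) := by
  have := HasSum.zero_add (f := fun j : ℕ => (f (-j) : ℂ) * z ^ (-(j : ℤ)))
    ((hasSum_genFunNeg hf hz).congr_fun fun j => by push_cast; ring_nf)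
  simpa using this

theorem hasSum_pos_genFun (he : f.Even) (hf : Summable f) (hz : ‖z‖ = 1) :
    HasSum (fun k : ℕ => (f (-k - 1) : ℂ) * z ^ (k + 1)) (genFun f z - genFunNeg f z - f 0) := by
  have hnonneg : HasSum (fun n : ℕ => (f n : ℂ) * z ^ (n : ℤ)) (genFun f z - genFunNeg f z) := by
    refine ((hasSum_genFun hf hz).nat_add_neg_add_one.sub (hasSum_genFunNeg hf hz)).congr_fun
      fun n => ?_
    ring_nf
  have hpos := (hasSum_nat_add_iff' 1).2 hnonneg
  simp only [range_one, sum_singleton, Nat.cast_zero, zpow_zero, mul_one] at hpos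
  refine hpos.congr_fun fun k => ?_
  rw [zpow_natCast, ← he]
  push_cast
  ring_nf

theorem hasSum_genFunBar_sq {u : ℤ → ℝ} (hu : Summable u) (hz : ‖z‖ = 1) :
    HasSum (fun k : ℕ => ((∑ j ∈ Icc (1 : ℤ) k, u (-k - 1 + j) * u (-j) : ℝ) : ℂ) * z ^ (k + 1))
      (genFunBar u z ^ 2) := by
  have hb := summable_norm_genFunBar hu hz
  have hsq := hasSum_sum_antidiagonal_mul hb hb
  rw [← sq] at hsq
  have hshift : HasSum (fun n : ℕ =>
      ((∑ j ∈ Icc (1 : ℤ) (n + 1 : ℕ), u (-(n + 1 : ℕ) - 1 + j) * u (-j) : ℝ) : ℂ) *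
        z ^ (n + 1 + 1)) (genFunBar u z ^ 2) := by
    refine hsq.congr_fun fun n => ?_
    push_cast
    rw [sum_Icc_eq_sum_antidiagonal (fun x => (u x : ℂ)), sum_mul]
    refine sum_congr rfl fun p hp => ?_
    rw [HasAntidiagonal.mem_antidiagonal] at hp
    rw [← hp]
    ring
  have := HasSum.zero_add (f := fun k : ℕ =>
    ((∑ j ∈ Icc (1 : ℤ) k, u (-k - 1 + j) * u (-j) : ℝ) : ℂ) * z ^ (k + 1)) hshift
  simpa using this

end GeneratingFunctions

def LDPEquation (f g : ℤ → ℝ) : Prop :=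
  ∀ x y : ℤ, y ≤ -1 →
    3 * f x * g y =
      f x * f y + f x * (∑ j ∈ Icc (1 : ℤ) (-y - 1), g (y + j) * g (-j)) +
        (if y = -1 then (∑' j : ℕ, f ((j : ℤ) + x + 1) * f (-(j : ℤ))) + g (-x - 1) else 0)

noncomputable def crossCorr (f : ℤ → ℝ) (x : ℤ) : ℝ := ∑' j : ℕ, f (j + x + 1) * f (-j)

section CrossCorrelation

variable {f : ℤ → ℝ} {z : ℂ}

theorem hasSum_crossCorr {s : ℝ} (he : f.Even) (hf : HasSum f s) :
    HasSum (crossCorr f) (s * ((s + f 0) / 2)) := by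
  have hnonpos : HasSum (fun j : ℕ => f (-j)) ((s + f 0) / 2) :=
    (he.hasSum_nat hf).congr_fun fun j => he j
  have hprod := hasSum_tsum_mul_shift (a := f) (b := fun j : ℕ => f (-j))
    (by simpa only [Real.norm_eq_abs] using hf.summable.abs)
    (by simpa only [Real.norm_eq_abs] using hnonpos.summable.abs)
  rwa [hf.tsum_eq, hnonpos.tsum_eq] at hprod

theorem hasSum_crossCorr_mul_zpow (hf : Summable f) (hz : ‖z‖ = 1) :
    HasSum (fun x : ℤ => (crossCorr f x : ℂ) * z ^ (x + 1))
      (genFun f z * (f 0 + genFunNeg f z)) := by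
  have hz0 : z ≠ 0 := by rintro rfl; simp at hz
  have hprod := hasSum_tsum_mul_shift
    (summable_norm_ofReal_mul (w := fun x : ℤ => z ^ x) hf fun x => by simp [hz])
    (summable_norm_ofReal_mul (a := fun j : ℕ => f (-j)) (w := fun j : ℕ => z ^ (-(j : ℤ)))
      (hf.comp_injective (neg_injective.comp Nat.cast_injective)) fun j => by simp [hz])
  rw [(hasSum_genFun hf hz).tsum_eq, (hasSum_nonpos_genFun hf hz).tsum_eq] at hprod
  refine hprod.congr_fun fun x => ?_
  rw [crossCorr, ofReal_tsum, ← tsum_mul_right]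
  refine tsum_congr fun j => ?_
  rw [mul_mul_mul_comm, ← zpow_add₀ hz0]
  push_cast
  ring_nf

end CrossCorrelation

namespace LDPEquation

variable {f g : ℤ → ℝ} {z : ℂ}

theorem crossCorr_add (hrec : LDPEquation f g) (x : ℤ) :
    crossCorr f x + g (-x - 1) = f x * (3 * g (-1) - f (-1)) := by
  have h := hrec x (-1) le_rfl
  norm_num at h
  rw [crossCorr]
  linarith

theorem three_mul_g_neg_one_sub (hrec : LDPEquation f g) (he : f.Even) (hf : HasSum f 1)
    (hg : HasSum g 1) : 3 * g (-1) - f (-1) = (3 + f 0) / 2 := by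
  -- Summed over `x`, the left side of `crossCorr_add` totals `(1 + f 0) / 2 + 1`.
  have hg' : HasSum (fun x : ℤ => g (-x - 1)) 1 :=
    (Equiv.hasSum_iff ((Equiv.neg ℤ).trans (Equiv.subRight 1))).2 hg
  have hsum := ((hasSum_crossCorr he hf).add hg').unique
    ((hf.mul_right (3 * g (-1) - f (-1))).congr_fun hrec.crossCorr_add)
  linarith

theorem g_neg_sub_one (hrec : LDPEquation f g) (he : f.Even) (hf : HasSum f 1)
    (hg : HasSum g 1) (x : ℤ) : g (-x - 1) = (3 + f 0) / 2 * f x - crossCorr f x := by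
  have h := hrec.crossCorr_add x
  rw [hrec.three_mul_g_neg_one_sub he hf hg] at h
  linarith

theorem three_mul_g (hrec : LDPEquation f g) (he : f.Even) (hf : HasSum f 1) (hg : HasSum g 1)
    (k : ℕ) : 3 * g (-k - 1) = f (-k - 1) + ∑ j ∈ Icc (1 : ℤ) k, g (-k - 1 + j) * g (-j) +
      if k = 0 then (3 + f 0) / 2 else 0 := by
  rcases eq_or_ne k 0 with rfl | hk
  · norm_num
    linarith [hrec.three_mul_g_neg_one_sub he hf hg]
  obtain ⟨x, hx⟩ : ∃ x, f x ≠ 0 := by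
    by_contra! h
    rw [show f = 0 from funext h] at hf
    exact one_ne_zero (hf.unique hasSum_zero)
  have h := hrec x (-k - 1) (by omega)
  rw [if_neg (by omega), show -(-(k : ℤ) - 1) - 1 = k by ring] at h
  rw [if_neg hk]
  refine mul_left_cancel₀ hx ?_
  linear_combination h

theorem genFunBar_eq (hrec : LDPEquation f g) (he : f.Even) (hf : HasSum f 1)
    (hg : HasSum g 1) (hgsupp : ∀ y : ℤ, 0 ≤ y → g y = 0) (hz : ‖z‖ = 1) :
    genFunBar g z = -genFun f z * genFunNegHat f z := by
  have hz0 : z ≠ 0 := by rintro rfl; simp at hz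
  have hrhs := (((hasSum_genFun hf.summable hz).mul_right z).mul_left ((3 + f 0) / 2 : ℂ)).sub
    (hasSum_crossCorr_mul_zpow hf.summable hz)
  rw [(hasSum_genFunBar_int hg.summable hgsupp hz).unique (hrhs.congr_fun fun x => ?_),
    genFunNegHat]
  · ring
  · rw [hrec.g_neg_sub_one he hf hg, zpow_add_one₀ hz0]
    push_cast
    ring

theorem three_mul_genFunBar (hrec : LDPEquation f g) (he : f.Even) (hf : HasSum f 1)
    (hg : HasSum g 1) (hz : ‖z‖ = 1) :
    3 * genFunBar g z = genFun f z - genFunNegHat f z + genFunBar g z ^ 2 := by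
  have hdirac : HasSum (fun k : ℕ => if k = 0 then ((3 + f 0) / 2 : ℂ) * z else 0)
      ((3 + f 0) / 2 * z) := hasSum_ite_eq 0 _
  have hrhs := ((hasSum_pos_genFun he hf.summable hz).add
    (hasSum_genFunBar_sq hg.summable hz)).add hdirac
  rw [((hasSum_genFunBar hg.summable hz).mul_left 3).unique (hrhs.congr_fun fun k => ?_),
    genFunNegHat]
  · ring
  · have h := congrArg (fun r : ℝ => (r : ℂ) * z ^ (k + 1)) (hrec.three_mul_g he hf hg k)
    split_ifs at h ⊢ with hk
    · subst hk; push_cast at h ⊢; linear_combination h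
    · push_cast at h ⊢; linear_combination h

end LDPEquation

theorem stmt_7_general
    (f g : ℤ → ℝ)
    (hfsum : HasSum f 1) (hgsum : HasSum g 1)
    (hfsymm : ∀ x, f (-x) = f x)
    (hgsupp : ∀ y : ℤ, 0 ≤ y → g y = 0)
    (hrec : ∀ x y : ℤ, y ≤ -1 →
      3 * f x * g y =
        f x * f y + f x * (∑ j ∈ Finset.Icc (1 : ℤ) (-y - 1), g (y + j) * g (-j)) +
          (if y = -1 then (∑' j : ℕ, f ((j : ℤ) + x + 1) * f (-(j : ℤ))) + g (-x - 1)
            else 0))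
    (F Fminus Gbar : ℝ → ℂ)
    (hF : ∀ t : ℝ, F t = ∑' x : ℤ, (f x : ℂ) * Complex.exp (Complex.I * (t : ℂ) * (x : ℂ)))
    (hFminus : ∀ t : ℝ, Fminus t =
      ∑' k : ℕ, (f (-(k : ℤ) - 1) : ℂ) * Complex.exp (Complex.I * (t : ℂ) * (-(k : ℂ) - 1)))
    (hGbar : ∀ t : ℝ, Gbar t =
      ∑' k : ℕ, (g (-(k : ℤ) - 1) : ℂ) * Complex.exp (Complex.I * (t : ℂ) * ((k : ℂ) + 1)))
    (c Fhat : ℝ → ℂ)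
    (hc : ∀ t : ℝ, c t =
      (f 0 : ℂ) - ((3 + f 0 : ℝ) : ℂ) / 2 * Complex.exp (Complex.I * (t : ℂ)))
    (hFhat : ∀ t : ℝ, Fhat t = Fminus t + c t) :
    ∀ t : ℝ, Gbar t = -(F t) * Fhat t ∧
      (F t) ^ 2 * (Fhat t) ^ 2 + (3 * F t - 1) * Fhat t + F t = 0 := by
  intro t
  set z := exp (I * t)
  have hz : ‖z‖ = 1 := norm_exp_I_mul_ofReal t
  have hzpow (x : ℤ) : exp (I * t * x) = z ^ x := by rw [← exp_int_mul, mul_comm]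
  have hFz : F t = genFun f z := by rw [hF, genFun]; simp only [hzpow]
  have hGbarz : Gbar t = genFunBar g z := by
    rw [hGbar, genFunBar]
    exact tsum_congr fun k => by rw [← zpow_natCast, ← hzpow]; push_cast; rfl
  have hFhatz : Fhat t = genFunNegHat f z := by
    rw [hFhat, hc, hFminus, genFunNegHat, genFunNeg]
    simp only [← hzpow]
    push_cast
    ring
  have hG := LDPEquation.genFunBar_eq hrec hfsymm hfsum hgsum hgsupp hz
  have hquad := LDPEquation.three_mul_genFunBar hrec hfsymm hfsum hgsum hz
  rw [hFz, hGbarz, hFhatz]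
  exact ⟨hG, by linear_combination (3 + genFun f z * genFunNegHat f z - genFunBar g z) * hG - hquad⟩

/-- Suppose `(f, g)` satisfies the LDP recursive equation, and define the characteristic
functions `F(t) = Σ_{x ∈ ℤ} f(x) e^{itx}`, `F⁻(t) = Σ_{x ≤ -1} f(x) e^{itx}`,
`Ḡ(t) = Σ_{y ≥ 1} g(-y) e^{ity}`.  With `κ = 3 + f 0`, `c(t) = f 0 - (κ/2) e^{it}`
and `F̂⁻ = F⁻ + c`, one has `Ḡ(t) = -F(t) F̂⁻(t)` and
`F(t)² F̂⁻(t)² + (3 F(t) - 1) F̂⁻(t) + F(t) = 0` for every real `t`. -/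
theorem stmt_7
    (f g : ℤ → ℝ)
    (hf0 : ∀ x, 0 ≤ f x) (hg0 : ∀ y, 0 ≤ g y)
    (hfsum : HasSum f 1) (hgsum : HasSum g 1)
    (hfsymm : ∀ x, f (-x) = f x)
    (hgsupp : ∀ y : ℤ, 0 ≤ y → g y = 0)
    (hrec : ∀ x y : ℤ, y ≤ -1 →
      3 * f x * g y =
        f x * f y + f x * (∑ j ∈ Finset.Icc (1 : ℤ) (-y - 1), g (y + j) * g (-j)) +
          (if y = -1 then (∑' j : ℕ, f ((j : ℤ) + x + 1) * f (-(j : ℤ))) + g (-x - 1)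
            else 0))
    (F Fminus Gbar : ℝ → ℂ)
    (hF : ∀ t : ℝ, F t = ∑' x : ℤ, (f x : ℂ) * Complex.exp (Complex.I * (t : ℂ) * (x : ℂ)))
    (hFminus : ∀ t : ℝ, Fminus t =
      ∑' k : ℕ, (f (-(k : ℤ) - 1) : ℂ) * Complex.exp (Complex.I * (t : ℂ) * (-(k : ℂ) - 1)))
    (hGbar : ∀ t : ℝ, Gbar t =
      ∑' k : ℕ, (g (-(k : ℤ) - 1) : ℂ) * Complex.exp (Complex.I * (t : ℂ) * ((k : ℂ) + 1)))
    (c Fhat : ℝ → ℂ)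
    (hc : ∀ t : ℝ, c t =
      (f 0 : ℂ) - ((3 + f 0 : ℝ) : ℂ) / 2 * Complex.exp (Complex.I * (t : ℂ)))
    (hFhat : ∀ t : ℝ, Fhat t = Fminus t + c t) :
    ∀ t : ℝ, Gbar t = -(F t) * Fhat t ∧
      (F t) ^ 2 * (Fhat t) ^ 2 + (3 * F t - 1) * Fhat t + F t = 0 :=
  stmt_7_general f g hfsum hgsum hfsymm hgsupp hrec F Fminus Gbar hF hFminus hGbar c Fhat hc hFhat
end

section
/- Let Y be an integer-valued random variable whose distribution is symmetric (Y and −Y have the same law), which is not almost surely constant, and which satisfies ℙ[Y = 0] > 0. Let F(t) = 𝔼[e^{itY}] be its characteristic function (which is real-valued by symmetry), and define the discriminant Δ(w) = (3w − 1)² − 4w³ for w ∈ ℝ. Then there exists δ > 0 such that Δ(F(t)) < 0 for all t with 0 < t < δ; consequently, for such t, the two roots of the quadratic equation F(t)²·W² + (3F(t) − 1)·W + F(t) = 0 in the unknown W are non-real complex conjugates. -/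
open MeasureTheory Complex
open scoped Real

/-! By symmetry `F` is real. It is continuous with `F 0 = 1`, so `F t > 1/4` near `0`; and since
a non-constant `Y` has an atom at some `n ≠ 0`, `1 - F t ≥ ℙ[Y = n] (1 - cos (t n)) > 0` for
`0 < t < 2π / |n|`. On `(1/4, 1)` the discriminant `Δ w = -(1 - w)² (4w - 1)` is negative, and it
is the discriminant of the quadratic, whose real coefficients make its roots non-real and
conjugate. -/

lemma quadratic_root_im_ne_zero_and_conj {a b c : ℝ} (h : discrim a b c < 0) {W : ℂ}
    (hW : (a : ℂ) * W ^ 2 + b * W + c = 0) :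
    W.im ≠ 0 ∧ (a : ℂ) * starRingEnd ℂ W ^ 2 + b * starRingEnd ℂ W + c = 0 := by
  refine ⟨fun him => ?_, by simpa using congrArg (starRingEnd ℂ) hW⟩
  have hWre : (W.re : ℂ) = W := Complex.ext rfl (by simp [him])
  rw [← hWre] at hW
  have hx : a * (W.re * W.re) + b * W.re + c = 0 := by
    have : ((a * (W.re * W.re) + b * W.re + c : ℝ) : ℂ) = 0 := by
      push_cast; linear_combination hW
    exact_mod_cast this
  exact h.not_ge (discrim_eq_sq_of_quadratic_eq_zero hx ▸ sq_nonneg _)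

lemma discrim_neg_of_mem_Ioo {w : ℝ} (h₁ : 1 / 4 < w) (h₂ : w < 1) :
    discrim (w ^ 2) (3 * w - 1) w < 0 := by
  have key : discrim (w ^ 2) (3 * w - 1) w = -((1 - w) ^ 2 * (4 * w - 1)) := by
    rw [discrim]; ring
  rw [key, neg_lt_zero]
  exact mul_pos (by nlinarith) (by linarith)

lemma Real.cos_mul_ne_one {t x : ℝ} (ht : 0 < t) (hx : x ≠ 0) (htx : t < 2 * π / |x|) :
    Real.cos (t * x) ≠ 1 := by
  have habs : |t * x| < 2 * π := by
    rw [abs_mul, abs_of_pos ht]; exact (lt_div_iff₀ (abs_pos.mpr hx)).mp htx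
  rw [Ne, Real.cos_eq_one_iff_of_lt_of_lt (neg_lt.mp (lt_of_le_of_lt (neg_le_abs _) habs))
    (lt_of_le_of_lt (le_abs_self _) habs)]
  exact mul_ne_zero ht.ne' hx

lemma charFun_im_eq_zero_of_map_neg_eq {E : Type*} [NormedAddCommGroup E] [InnerProductSpace ℝ E]
    [MeasurableSpace E] [BorelSpace E] {μ : Measure E} (h : μ.map Neg.neg = μ) (t : E) :
    (charFun μ t).im = 0 := by
  have h' : charFun μ t = charFun μ (-t) := by
    conv_lhs => rw [← h]
    simpa using charFun_map_smul (μ := μ) (-1) t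
  rw [← Complex.conj_eq_iff_im, ← charFun_neg, ← h']

lemma integrable_cos_mul {μ : Measure ℝ} [IsFiniteMeasure μ] (t : ℝ) :
    Integrable (fun x => Real.cos (t * x)) μ :=
  .of_bound (by fun_prop) 1 (ae_of_all _ fun x => by simpa using Real.abs_cos_le_one (t * x))

lemma re_charFun_eq_integral_cos {μ : Measure ℝ} [IsFiniteMeasure μ] (t : ℝ) :
    (charFun μ t).re = ∫ x, Real.cos (t * x) ∂μ := by
  have hint : Integrable (fun x : ℝ => exp (t * x * I)) μ :=
    .of_bound (by fun_prop) 1 (ae_of_all _ fun x => by simp [← ofReal_mul, norm_exp_ofReal_mul_I])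
  rw [charFun_apply_real, ← RCLike.re_to_complex, ← integral_re hint]
  simp only [RCLike.re_to_complex, ← ofReal_mul, exp_ofReal_mul_I_re]

lemma re_charFun_lt_one {μ : Measure ℝ} [IsProbabilityMeasure μ] {x t : ℝ} (hx : μ {x} ≠ 0)
    (hcos : Real.cos (t * x) ≠ 1) : (charFun μ t).re < 1 := by
  have hint : Integrable (fun y => 1 - Real.cos (t * y)) μ :=
    (integrable_const 1).sub (integrable_cos_mul t)
  have hatom : 0 < μ.real {x} * (1 - Real.cos (t * x)) :=
    mul_pos (ENNReal.toReal_pos hx (measure_ne_top _ _))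
      (sub_pos.mpr ((Real.cos_le_one _).lt_of_ne hcos))
  have hle : μ.real {x} * (1 - Real.cos (t * x)) ≤ 1 - (charFun μ t).re :=
    calc μ.real {x} * (1 - Real.cos (t * x)) = ∫ y in {x}, 1 - Real.cos (t * y) ∂μ := by
          rw [integral_singleton, smul_eq_mul]
      _ ≤ ∫ y, 1 - Real.cos (t * y) ∂μ :=
          setIntegral_le_integral hint (ae_of_all _ fun y => sub_nonneg.mpr (Real.cos_le_one _))
      _ = 1 - (charFun μ t).re := by
          rw [integral_sub (integrable_const 1) (integrable_cos_mul t), re_charFun_eq_integral_cos]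
          simp
  linarith

section RandomVariable

variable {Ω : Type*} [MeasurableSpace Ω] {P : Measure Ω} {Y : Ω → ℤ}

lemma exists_ne_measure_preimage_singleton_ne_zero {α : Type*} [Countable α] {X : Ω → α}
    {a : α} (h : ¬ ∀ᵐ ω ∂P, X ω = a) :
    ∃ b ≠ a, P (X ⁻¹' {b}) ≠ 0 := by
  by_contra! hb
  refine h (ae_iff.mpr (measure_mono_null (fun ω hω => ?_)
    ((measure_biUnion_null_iff (Set.to_countable {b | b ≠ a})).mpr hb)))
  exact Set.mem_biUnion hω rfl

lemma integral_exp_I_mul_intCast_eq_charFun (hY : Measurable Y) (t : ℝ) :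
    ∫ ω, exp (I * t * Y ω) ∂P = charFun (P.map fun ω => (Y ω : ℝ)) t := by
  rw [charFun_apply_real, integral_map (by fun_prop) (by fun_prop)]
  simp only [ofReal_intCast]
  congr 1 with ω
  ring_nf

lemma map_intCast_apply_singleton (hY : Measurable Y) (n : ℤ) :
    P.map (fun ω => (Y ω : ℝ)) {(n : ℝ)} = P (Y ⁻¹' {n}) := by
  rw [Measure.map_apply (by fun_prop) (measurableSet_singleton _)]
  congr 1 with ω
  simp

lemma map_neg_map_intCast_eq (hY : Measurable Y) (hsymm : P.map Y = P.map fun ω => -Y ω) :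
    (P.map fun ω => (Y ω : ℝ)).map Neg.neg = P.map fun ω => (Y ω : ℝ) := by
  have hcast : Measurable (Int.cast : ℤ → ℝ) := measurable_from_top
  rw [Measure.map_map measurable_neg (by fun_prop)]
  calc P.map (Neg.neg ∘ fun ω => (Y ω : ℝ)) = (P.map fun ω => -Y ω).map Int.cast := by
        rw [Measure.map_map hcast (by fun_prop)]; congr 1 with ω; simp
    _ = P.map fun ω => (Y ω : ℝ) := by rw [← hsymm, Measure.map_map hcast hY]; rfl

end RandomVariable

theorem stmt_8_general
    {Ω : Type*} [MeasurableSpace Ω] (P : Measure Ω) [IsProbabilityMeasure P]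
    (Y : Ω → ℤ) (hY : Measurable Y)
    (hsymm : Measure.map Y P = Measure.map (fun ω => -(Y ω)) P)
    (hnonconst : ¬ ∃ a : ℤ, ∀ᵐ ω ∂P, Y ω = a)
    (F : ℝ → ℂ)
    (hF : ∀ t : ℝ, F t = ∫ ω, Complex.exp (Complex.I * (t : ℂ) * (Y ω : ℂ)) ∂P)
    (Δ : ℝ → ℝ) (hΔ : ∀ w, Δ w = (3 * w - 1) ^ 2 - 4 * w ^ 3) :
    ∃ δ : ℝ, 0 < δ ∧ ∀ t : ℝ, 0 < t → t < δ →
      (F t).im = 0 ∧ Δ ((F t).re) < 0 ∧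
      ∀ W : ℂ, (F t) ^ 2 * W ^ 2 + (3 * F t - 1) * W + F t = 0 →
        W.im ≠ 0 ∧
        (F t) ^ 2 * (starRingEnd ℂ W) ^ 2 + (3 * F t - 1) * starRingEnd ℂ W + F t = 0 := by
  set μ := P.map fun ω => (Y ω : ℝ)
  have : IsProbabilityMeasure μ := Measure.isProbabilityMeasure_map (by fun_prop)
  have hFμ t : F t = charFun μ t := (hF t).trans (integral_exp_I_mul_intCast_eq_charFun hY t)
  obtain ⟨n, hn0, hn⟩ :=
    exists_ne_measure_preimage_singleton_ne_zero (not_exists.mp hnonconst 0)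
  have hnear : ∀ᶠ t in nhds 0, 1 / 4 < (F t).re := by
    simp only [hFμ]
    refine (continuous_re.comp continuous_charFun).continuousAt.eventually (lt_mem_nhds ?_)
    norm_num
  obtain ⟨δ, hδ, hball⟩ := Metric.eventually_nhds_iff.mp hnear
  have hn' : (n : ℝ) ≠ 0 := Int.cast_ne_zero.mpr hn0
  refine ⟨min δ (2 * π / |(n : ℝ)|), lt_min hδ (by positivity), fun t ht htδ => ?_⟩
  have him : (F t).im = 0 :=
    hFμ t ▸ charFun_im_eq_zero_of_map_neg_eq (map_neg_map_intCast_eq hY hsymm) t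
  have hlt : (F t).re < 1 := hFμ t ▸ re_charFun_lt_one (by rwa [map_intCast_apply_singleton hY])
    (Real.cos_mul_ne_one ht hn' (htδ.trans_le (min_le_right _ _)))
  have hgt : 1 / 4 < (F t).re :=
    hball (by simpa [abs_of_pos ht] using htδ.trans_le (min_le_left _ _))
  have hdisc := discrim_neg_of_mem_Ioo hgt hlt
  have hΔt : Δ (F t).re < 0 := by rw [hΔ]; rw [discrim] at hdisc; linarith
  refine ⟨him, hΔt, fun W hW => ?_⟩
  have hFr : F t = ((F t).re : ℂ) :=
    (Complex.conj_eq_iff_re.mp (Complex.conj_eq_iff_im.mpr him)).symm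
  rw [hFr] at hW ⊢
  exact_mod_cast quadratic_root_im_ne_zero_and_conj hdisc (by exact_mod_cast hW)

/-- Let `Y` be an integer-valued random variable with symmetric law, not a.s. constant,
and with `ℙ[Y = 0] > 0`.  Let `F(t) = 𝔼[e^{itY}]` (real-valued by symmetry) and
`Δ(w) = (3w - 1)² - 4w³`.  Then there is `δ > 0` such that for all `0 < t < δ` one has
`Δ(F(t)) < 0`; consequently every root `W` of `F(t)² W² + (3F(t) - 1) W + F(t) = 0` is
non-real, and the roots come in complex-conjugate pairs. -/
theorem stmt_8
    {Ω : Type*} [MeasurableSpace Ω] (P : Measure Ω) [IsProbabilityMeasure P]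
    (Y : Ω → ℤ) (hY : Measurable Y)
    (hsymm : Measure.map Y P = Measure.map (fun ω => -(Y ω)) P)
    (hnonconst : ¬ ∃ a : ℤ, ∀ᵐ ω ∂P, Y ω = a)
    (h0 : 0 < P {ω | Y ω = 0})
    (F : ℝ → ℂ)
    (hF : ∀ t : ℝ, F t = ∫ ω, Complex.exp (Complex.I * (t : ℂ) * (Y ω : ℂ)) ∂P)
    (Δ : ℝ → ℝ) (hΔ : ∀ w, Δ w = (3 * w - 1) ^ 2 - 4 * w ^ 3) :
    ∃ δ : ℝ, 0 < δ ∧ ∀ t : ℝ, 0 < t → t < δ →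
      (F t).im = 0 ∧ Δ ((F t).re) < 0 ∧
      ∀ W : ℂ, (F t) ^ 2 * W ^ 2 + (3 * F t - 1) * W + F t = 0 →
        W.im ≠ 0 ∧
        (F t) ^ 2 * (starRingEnd ℂ W) ^ 2 + (3 * F t - 1) * starRingEnd ℂ W + F t = 0 :=
  stmt_8_general P Y hY hsymm hnonconst F hF Δ hΔ
end

section
/- Suppose (f, g) satisfies the SDP recursive equation. Then 0 < f(0) < 1 and g(−1) > 0; in particular, a random variable with probability mass function f is not almost surely constant and takes the value 0 with positive probability. -/
/-!
Specialising the recursion to `y = -1`, every term on its right-hand side is nonnegative, so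
`g (-1) ^ 2 * f (x + 1) + g (x - 1) ≤ 3 * f x * g (-1)` for all `x`. If `g (-1) = 0` this kills
all of `g`, contradicting `∑ g = 1`. Otherwise a zero of `f` at `x` forces a zero at `x + 1`;
by symmetry a zero at `0` or `-1` would then spread to all of `ℤ`, contradicting `∑ f = 1`.
Hence `f 0` and `f (-1)` are both positive, and `f 0 ≤ 1 - f (-1) < 1`.
-/

lemma Int.forall_of_zero_of_succ_of_neg {P : ℤ → Prop} (h0 : P 0)
    (hsucc : ∀ x, P x → P (x + 1)) (hneg : ∀ x, P x → P (-x)) (x : ℤ) : P x := by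
  have hnat : ∀ n : ℕ, P n := fun n => by
    induction n with
    | zero => exact h0
    | succ n ih => exact_mod_cast hsucc n ih
  obtain ⟨n, rfl | rfl⟩ := x.eq_nat_or_neg
  · exact hnat n
  · exact hneg n (hnat n)

lemma eq_zero_of_map_zero_of_succ {M : Type*} [Zero M] {f : ℤ → M}
    (hsymm : ∀ x, f (-x) = f x) (hsucc : ∀ x, f x = 0 → f (x + 1) = 0) (h0 : f 0 = 0) :
    f = 0 :=
  funext <| Int.forall_of_zero_of_succ_of_neg h0 hsucc fun x hx => (hsymm x).trans hx

theorem stmt_11_general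
    (f g : ℤ → ℝ)
    (hf0 : ∀ x, 0 ≤ f x) (hg0 : ∀ y, 0 ≤ g y)
    (hfsum : HasSum f 1) (hgsum : HasSum g 1)
    (hfsymm : ∀ x, f (-x) = f x)
    (hrec : ∀ x y : ℤ, -1 ≤ y →
      3 * f x * g y =
        f x * (f y + ∑ j ∈ Finset.Icc (-1 : ℤ) (y + 1), g j * g (y - j)) +
          (if y = -1 then
            (∑' j : ℕ, f (-(j : ℤ) - 2) * f (x + (j : ℤ) + 1)) +
              g (-1) ^ 2 * f (x + 1) + g (x - 1)
            else 0)) :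
    0 < f 0 ∧ f 0 < 1 ∧ 0 < g (-1) := by
  have hbound : ∀ x, g (-1) ^ 2 * f (x + 1) + g (x - 1) ≤ 3 * f x * g (-1) := fun x => by
    have h := hrec x (-1) le_rfl
    simp only [if_true] at h
    have hsq : 0 ≤ ∑ j ∈ Finset.Icc (-1 : ℤ) (-1 + 1), g j * g (-1 - j) :=
      Finset.sum_nonneg fun j _ => mul_nonneg (hg0 _) (hg0 _)
    have hser : 0 ≤ ∑' j : ℕ, f (-(j : ℤ) - 2) * f (x + (j : ℤ) + 1) :=
      tsum_nonneg fun j => mul_nonneg (hf0 _) (hf0 _)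
    nlinarith [mul_nonneg (hf0 x) (add_nonneg (hf0 (-1)) hsq)]
  have hg : 0 < g (-1) := by
    refine (hg0 _).lt_of_ne' fun h => ?_
    have hle : ∀ y, g y ≤ 0 := fun y => by simpa [h] using hbound (y + 1)
    exact one_ne_zero (le_antisymm (hasSum_le hle hgsum hasSum_zero) zero_le_one)
  have hsucc : ∀ x, f x = 0 → f (x + 1) = 0 := fun x hx => by
    have h := hbound x
    rw [hx, mul_zero, zero_mul] at h
    have hprod : g (-1) ^ 2 * f (x + 1) ≤ 0 := by linarith [hg0 (x - 1)]
    exact le_antisymm (nonpos_of_mul_nonpos_right hprod (by positivity)) (hf0 _)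
  have hf : f ≠ 0 := by rintro rfl; exact one_ne_zero (hfsum.unique hasSum_zero)
  have hpos0 : f 0 ≠ 0 := fun h => hf (eq_zero_of_map_zero_of_succ hfsymm hsucc h)
  have hpos1 : f (-1) ≠ 0 := fun h => hpos0 (by simpa using hsucc _ h)
  have hpair : f 0 + f (-1) ≤ 1 := by
    simpa using sum_le_hasSum {0, -1} (fun i _ => hf0 i) hfsum
  exact ⟨(hf0 0).lt_of_ne' hpos0, by linarith [(hf0 (-1)).lt_of_ne' hpos1], hg⟩

/-- Suppose the probability mass functions `f` (symmetric on `ℤ`) and `g`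
(supported on `{y : y ≥ -1}`) satisfy the SDP recursive equation:
for all `x ∈ ℤ` and `y ≥ -1`,
`3 f(x) g(y) = f(x) (f(y) + Σ_{j=-1}^{y+1} g(j) g(y-j))
  + 1_{y=-1} (Σ_{j ≤ -2} f(j) f(x-j-1) + g(-1)² f(x+1) + g(x-1))`.
Then `0 < f 0 < 1` and `g(-1) > 0`. -/
theorem stmt_11
    (f g : ℤ → ℝ)
    (hf0 : ∀ x, 0 ≤ f x) (hg0 : ∀ y, 0 ≤ g y)
    (hfsum : HasSum f 1) (hgsum : HasSum g 1)
    (hfsymm : ∀ x, f (-x) = f x)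
    (hgsupp : ∀ y : ℤ, y ≤ -2 → g y = 0)
    (hrec : ∀ x y : ℤ, -1 ≤ y →
      3 * f x * g y =
        f x * (f y + ∑ j ∈ Finset.Icc (-1 : ℤ) (y + 1), g j * g (y - j)) +
          (if y = -1 then
            (∑' j : ℕ, f (-(j : ℤ) - 2) * f (x + (j : ℤ) + 1)) +
              g (-1) ^ 2 * f (x + 1) + g (x - 1)
            else 0)) :
    0 < f 0 ∧ f 0 < 1 ∧ 0 < g (-1) :=
  stmt_11_general f g hf0 hg0 hfsum hgsum hfsymm hrec
end

section
/- Suppose (f, g) satisfies the SDP recursive equation. Set c(t) = (2g(−1)² + e^{it}·(−3 − 2g(−1)² + f(0)))/(2e^{2it}) and F̂⁻(t) = F⁻(t) + c(t). Then for every t ∈ ℝ one has G(t) = −F(t)·F̂⁻(t), and F̂⁻(t) satisfies the quadratic equation F(t)²·F̂⁻(t)² + (3F(t) − 1)·F̂⁻(t) + F(t) = 0. -/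
/-!
With `z = e^{it}`, `F`, `F⁻` and `G` are Laurent series in `z` with absolutely summable
coefficients. Multiplying the recursion for `y ≥ 0` by `z^y` and summing gives, via the Cauchy
product, `G² = 3G - (F - F⁻) + g(-1)² z⁻² + (2 g(-1) g(0) - 3 g(-1)) z⁻¹`. Multiplying the recursion
for `y = -1` by `z^x` and summing over `x` turns the convolution `Σ_{j ≤ -2} f(j) f(x-j-1)` into
`(z F⁻ - f(-1)) F`, which expresses `z G` as `F` times a polynomial in `z F⁻` and `z⁻¹`.
Evaluating the first identity at `z = 1`, where `F = G = 1` and, by symmetry,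
`F⁻ = (1 - f(0))/2`, gives `3 g(-1) - 2 g(-1) g(0) = g(-1)² + (3 - f(0))/2`; with it the second
identity becomes `G = -F F̂⁻`, and the first one the quadratic equation.
-/

open Complex Finset

theorem hasSum_tsum_mul_add {R ι G : Type*} [NormedRing R] [CompleteSpace R] [AddGroup G]
    {a : ι → R} {b : G → R} (e : ι → G) (ha : Summable (‖a ·‖)) (hb : Summable (‖b ·‖)) :
    HasSum (fun x : G => ∑' j, a j * b (x + e j)) ((∑' j, a j) * ∑' y, b y) := by
  let σ : G × ι ≃ ι × G :=
    { toFun := fun p => (p.2, p.1 + e p.2)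
      invFun := fun q => (q.2 - e q.1, q.1)
      left_inv := fun p => by simp
      right_inv := fun q => by simp }
  have hprod := ha.of_norm.hasSum.mul hb.of_norm.hasSum (summable_mul_of_summable_norm ha hb)
  have hσ := σ.hasSum_iff.mpr hprod
  exact hσ.prod_fiberwise fun x => (hσ.summable.prod_factor x).hasSum

theorem HasSum.nat_of_neg_add_one {M : Type*} [AddCommGroup M] [TopologicalSpace M]
    [IsTopologicalAddGroup M] {φ : ℤ → M} {s t : M} (hφ : HasSum φ s)
    (hneg : HasSum (fun n : ℕ => φ (-(n + 1))) t) : HasSum (fun n : ℕ => φ n) (s - t) := by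
  simpa using hφ.nat_add_neg_add_one.sub hneg

theorem sum_antidiagonal_add_two_sub_one {M : Type*} [AddCommMonoid M] (φ : ℤ → ℤ → M) (n : ℕ) :
    ∑ kl ∈ antidiagonal (n + 2), φ (kl.1 - 1) (kl.2 - 1) =
      ∑ j ∈ Icc (-1 : ℤ) (n + 1), φ j (n - j) := by
  refine sum_nbij' (fun kl => (kl.1 : ℤ) - 1) (fun j => ((j + 1).toNat, (n + 1 - j).toNat))
    ?_ ?_ ?_ ?_ ?_
  · intro kl hkl
    simp only [mem_Icc, HasAntidiagonal.mem_antidiagonal] at hkl ⊢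
    omega
  · intro j hj
    simp only [mem_Icc, HasAntidiagonal.mem_antidiagonal] at hj ⊢
    omega
  · intro kl hkl
    simp only [HasAntidiagonal.mem_antidiagonal] at hkl
    ext <;> simp
    omega
  · intro j hj
    simp only [mem_Icc] at hj
    simp only
    omega
  · intro kl hkl
    simp only [HasAntidiagonal.mem_antidiagonal] at hkl
    congr 1
    omega

theorem summable_norm_ofReal_mul_zpow {ι : Type*} {u : ι → ℝ} (hu : Summable u) (e : ι → ℤ)
    {z : ℂ} (hz : ‖z‖ = 1) : Summable fun i => ‖(u i : ℂ) * z ^ e i‖ := by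
  simpa [norm_zpow, hz] using hu.abs

theorem hasSum_ofReal_mul_exp_zpow {ι : Type*} {u : ι → ℝ} (hu : Summable u) (e : ι → ℤ) (t : ℝ) :
    HasSum (fun i => (u i : ℂ) * exp (I * t) ^ e i) (∑' i, (u i : ℂ) * exp (I * t * e i)) := by
  simpa only [← exp_int_mul, mul_comm] using
    (summable_norm_ofReal_mul_zpow hu e (norm_exp_I_mul_ofReal t)).of_norm.hasSum

theorem Function.Even.hasSum_neg_sub_one {f : ℤ → ℝ} {s : ℝ} (hsymm : Function.Even f)
    (hf : HasSum f s) :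
    HasSum (fun k : ℕ => f (-k - 1)) ((s - f 0) / 2) := by
  have hneg : HasSum (fun k : ℕ => f (-(k + 1))) (∑' k : ℕ, f (-(k + 1))) :=
    (hf.summable.comp_injective fun _ _ hk => by simpa using hk).hasSum
  have hpos := (hasSum_nat_add_iff' 1).mpr (hf.nat_of_neg_add_one hneg)
  simp only [Nat.cast_add, Nat.cast_one, ← hsymm (_ + 1), sum_range_one, Nat.cast_zero] at hpos
  have hS := hneg.unique hpos
  rw [show (s - f 0) / 2 = ∑' k : ℕ, f (-(k + 1)) by linarith]
  exact hneg.congr_fun fun k => by rw [neg_add']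

theorem hasSum_tsum_neg_mul_zpow {f : ℤ → ℝ} {z F Fm : ℂ} (hf : Summable f) (hz : ‖z‖ = 1)
    (hF : HasSum (fun x : ℤ => (f x : ℂ) * z ^ x) F)
    (hFm : HasSum (fun k : ℕ => (f (-k - 1) : ℂ) * z ^ (-(k : ℤ) - 1)) Fm) :
    HasSum (fun x : ℤ => ((∑' j : ℕ, f (-(j : ℤ) - 2) * f (x + j + 1) : ℝ) : ℂ) * z ^ x)
      ((z * Fm - f (-1)) * F) := by
  have hz0 : z ≠ 0 := norm_ne_zero_iff.mp (by simp [hz])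
  have hFm' : HasSum (fun j : ℕ => (f (-(j : ℤ) - 2) : ℂ) * z ^ (-(j : ℤ) - 1))
      (z * Fm - f (-1)) := by
    have hFm1 := ((hasSum_nat_add_iff' 1).mpr hFm).mul_left z
    rw [sum_range_one, mul_sub, mul_left_comm, ← zpow_one_add₀ hz0] at hFm1
    norm_num at hFm1
    refine hFm1.congr_fun fun j => ?_
    rw [mul_left_comm, ← zpow_one_add₀ hz0]
    ring_nf
  have hf2 : Summable fun j : ℕ => f (-(j : ℤ) - 2) :=
    hf.comp_injective fun _ _ hk => by simpa using hk
  have := hasSum_tsum_mul_add (fun j : ℕ => (j : ℤ) + 1)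
    (summable_norm_ofReal_mul_zpow hf2 (fun j => -(j : ℤ) - 1) hz)
    (summable_norm_ofReal_mul_zpow hf (fun y => y) hz)
  rw [hFm'.tsum_eq, hF.tsum_eq] at this
  refine this.congr_fun fun x => ?_
  rw [ofReal_tsum, ← tsum_mul_right]
  refine tsum_congr fun j => ?_
  rw [mul_mul_mul_comm, ← zpow_add₀ hz0]
  push_cast
  ring_nf

def SDPRecursion (f g : ℤ → ℝ) : Prop :=
  ∀ x y : ℤ, -1 ≤ y →
    3 * f x * g y =
      f x * (f y + ∑ j ∈ Icc (-1 : ℤ) (y + 1), g j * g (y - j)) +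
        (if y = -1 then
          (∑' j : ℕ, f (-(j : ℤ) - 2) * f (x + (j : ℤ) + 1)) + g (-1) ^ 2 * f (x + 1) + g (x - 1)
          else 0)

namespace SDPRecursion

variable {f g : ℤ → ℝ}

theorem at_natCast (h : SDPRecursion f g) (hf : f ≠ 0) (n : ℕ) :
    3 * g n = f n + ∑ j ∈ Icc (-1 : ℤ) (n + 1), g j * g (n - j) := by
  obtain ⟨x, hx⟩ := Function.ne_iff.mp hf
  have hxn := h x n (by omega)
  rw [if_neg (by omega : (n : ℤ) ≠ -1), add_zero, mul_comm 3, mul_assoc] at hxn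
  exact mul_left_cancel₀ hx hxn

theorem at_neg_one (h : SDPRecursion f g) (x : ℤ) :
    3 * f x * g (-1) =
      f x * (f (-1) + 2 * g (-1) * g 0) + (∑' j : ℕ, f (-(j : ℤ) - 2) * f (x + j + 1)) +
        g (-1) ^ 2 * f (x + 1) + g (x - 1) := by
  have hx := h x (-1) le_rfl
  have hIcc : Icc (-1 : ℤ) (-1 + 1) = {-1, 0} := by
    ext j
    simp only [mem_Icc, mem_insert, mem_singleton]
    omega
  rw [if_pos rfl, hIcc, sum_pair (by norm_num)] at hx
  norm_num at hx
  linarith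

variable {z F Fm G : ℂ}

theorem G_sq_eq (h : SDPRecursion f g) (hf : f ≠ 0) (hg : Summable g) (hz : ‖z‖ = 1)
    (hF : HasSum (fun x : ℤ => (f x : ℂ) * z ^ x) F)
    (hFm : HasSum (fun k : ℕ => (f (-k - 1) : ℂ) * z ^ (-(k : ℤ) - 1)) Fm)
    (hG : HasSum (fun k : ℕ => (g (k - 1) : ℂ) * z ^ ((k : ℤ) - 1)) G) :
    G ^ 2 = g (-1) ^ 2 * z⁻¹ ^ 2 + 2 * g (-1) * g 0 * z⁻¹ + 3 * (G - g (-1) * z⁻¹) - (F - Fm) := by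
  have hz0 : z ≠ 0 := norm_ne_zero_iff.mp (by simp [hz])
  set a : ℕ → ℂ := fun k => (g (k - 1) : ℂ) * z ^ ((k : ℤ) - 1)
  have ha : Summable (‖a ·‖) :=
    summable_norm_ofReal_mul_zpow (hg.comp_injective fun _ _ hk => by simpa using hk) _ hz
  have hsq : HasSum (fun n => ∑ kl ∈ antidiagonal n, a kl.1 * a kl.2) (G ^ 2) := by
    rw [sq, ← hG.tsum_eq, tsum_mul_tsum_eq_tsum_sum_antidiagonal_of_summable_norm ha ha]
    exact (summable_norm_sum_mul_antidiagonal_of_summable_norm ha ha).of_norm.hasSum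
  have hterm (n : ℕ) :
      ∑ kl ∈ antidiagonal (n + 2), a kl.1 * a kl.2 = z ^ (n : ℤ) * (3 * g n - f n) := by
    rw [sum_antidiagonal_add_two_sub_one (fun i j => (g i : ℂ) * z ^ i * ((g j : ℂ) * z ^ j)),
      ← ofReal_ofNat, ← ofReal_mul, ← ofReal_sub, h.at_natCast hf n,
      add_sub_cancel_left, ofReal_sum, mul_sum]
    refine sum_congr rfl fun j _ => ?_
    rw [mul_mul_mul_comm, ← zpow_add₀ hz0, add_sub_cancel]
    push_cast
    ring
  have hGnat : HasSum (fun n : ℕ => (g n : ℂ) * z ^ (n : ℤ)) (G - g (-1) * z⁻¹) := by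
    simpa [a] using (hasSum_nat_add_iff' 1).mpr hG
  have hFnat : HasSum (fun n : ℕ => (f n : ℂ) * z ^ (n : ℤ)) (F - Fm) :=
    hF.nat_of_neg_add_one (hFm.congr_fun fun n => by push_cast [neg_add']; rfl)
  have hhead : ∑ n ∈ range 2, ∑ kl ∈ antidiagonal n, a kl.1 * a kl.2 =
      g (-1) ^ 2 * z⁻¹ ^ 2 + 2 * g (-1) * g 0 * z⁻¹ := by
    simp [a, sum_range_succ, Nat.antidiagonal_succ]
    ring
  have htail := (hasSum_nat_add_iff' 2).mpr hsq
  simp only [hterm] at htail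
  have := htail.unique (((hGnat.mul_left 3).sub hFnat).congr_fun fun n => by ring)
  linear_combination this + hhead

theorem three_mul_F_eq (h : SDPRecursion f g) (hf : Summable f)
    (hgsupp : ∀ y : ℤ, y ≤ -2 → g y = 0) (hz : ‖z‖ = 1)
    (hF : HasSum (fun x : ℤ => (f x : ℂ) * z ^ x) F)
    (hFm : HasSum (fun k : ℕ => (f (-k - 1) : ℂ) * z ^ (-(k : ℤ) - 1)) Fm)
    (hG : HasSum (fun k : ℕ => (g (k - 1) : ℂ) * z ^ ((k : ℤ) - 1)) G) :
    3 * g (-1) * F =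
      (f (-1) + 2 * g (-1) * g 0) * F + (z * Fm - f (-1)) * F + g (-1) ^ 2 * z⁻¹ * F + z * G := by
  have hz0 : z ≠ 0 := norm_ne_zero_iff.mp (by simp [hz])
  have hshift : HasSum (fun x : ℤ => (f (x + 1) : ℂ) * z ^ x) (z⁻¹ * F) :=
    (((Equiv.addRight (1 : ℤ)).hasSum_iff.mpr hF).mul_left z⁻¹).congr_fun fun x => by
      simp only [Equiv.coe_addRight, Function.comp_apply, zpow_add_one₀ hz0]
      field_simp
  have hgz : HasSum (fun x : ℤ => (g (x - 1) : ℂ) * z ^ x) (z * G) := by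
    refine (Nat.cast_injective.hasSum_iff fun x hx => ?_).mp
      ((hG.mul_left z).congr_fun fun k => ?_)
    · rw [hgsupp (x - 1) (by contrapose! hx; exact ⟨x.toNat, by omega⟩), ofReal_zero, zero_mul]
    · rw [Function.comp_apply, mul_left_comm, ← zpow_one_add₀ hz0, add_sub_cancel]
  have hconv := hasSum_tsum_neg_mul_zpow hf hz hF hFm
  refine (hF.mul_left (3 * g (-1) : ℂ)).unique ((((hF.mul_left (f (-1) + 2 * g (-1) * g 0 : ℂ)).add
    hconv).add (hshift.mul_left (g (-1) ^ 2 : ℂ))).add hgz |>.congr_fun fun x => ?_) |>.trans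
    (by ring)
  have := congrArg ((↑) : ℝ → ℂ) (h.at_neg_one x)
  push_cast at this ⊢
  linear_combination z ^ x * this

theorem normalization (h : SDPRecursion f g) (hf : HasSum f 1) (hg : HasSum g 1)
    (hgsupp : ∀ y : ℤ, y ≤ -2 → g y = 0) (hsymm : Function.Even f) :
    3 * g (-1) - 2 * g (-1) * g 0 = g (-1) ^ 2 + (3 - f 0) / 2 := by
  have hg' : HasSum (fun k : ℕ => g (k - 1)) 1 := by
    have hinj : Function.Injective fun k : ℕ => (k : ℤ) - 1 := fun _ _ hk => by simpa using hk
    refine (hinj.hasSum_iff fun y hy => hgsupp y ?_).mpr hg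
    contrapose! hy
    exact ⟨(y + 1).toNat, by dsimp only; omega⟩
  have := h.G_sq_eq (z := 1) (fun h0 => one_ne_zero (hf.unique (h0 ▸ hasSum_zero)))
    hg.summable (by simp) (by simpa using hasSum_ofReal.mpr hf)
    (by simpa using hasSum_ofReal.mpr (hsymm.hasSum_neg_sub_one hf))
    (by simpa using hasSum_ofReal.mpr hg')
  exact_mod_cast (by linear_combination this :
    (3 * g (-1) - 2 * g (-1) * g 0 : ℂ) = g (-1) ^ 2 + (3 - f 0) / 2)

end SDPRecursion

theorem stmt_12_general
    (f g : ℤ → ℝ)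
    (hfsum : HasSum f 1) (hgsum : HasSum g 1)
    (hfsymm : ∀ x, f (-x) = f x)
    (hgsupp : ∀ y : ℤ, y ≤ -2 → g y = 0)
    (hrec : ∀ x y : ℤ, -1 ≤ y →
      3 * f x * g y =
        f x * (f y + ∑ j ∈ Finset.Icc (-1 : ℤ) (y + 1), g j * g (y - j)) +
          (if y = -1 then
            (∑' j : ℕ, f (-(j : ℤ) - 2) * f (x + (j : ℤ) + 1)) +
              g (-1) ^ 2 * f (x + 1) + g (x - 1)
            else 0))
    (F Fminus G : ℝ → ℂ)
    (hF : ∀ t : ℝ, F t = ∑' x : ℤ, (f x : ℂ) * Complex.exp (Complex.I * (t : ℂ) * (x : ℂ)))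
    (hFminus : ∀ t : ℝ, Fminus t =
      ∑' k : ℕ, (f (-(k : ℤ) - 1) : ℂ) * Complex.exp (Complex.I * (t : ℂ) * (-(k : ℂ) - 1)))
    (hG : ∀ t : ℝ, G t =
      ∑' k : ℕ, (g ((k : ℤ) - 1) : ℂ) * Complex.exp (Complex.I * (t : ℂ) * ((k : ℂ) - 1)))
    (c Fhat : ℝ → ℂ)
    (hc : ∀ t : ℝ, c t =
      (((2 * g (-1) ^ 2 : ℝ) : ℂ) +
          Complex.exp (Complex.I * (t : ℂ)) * ((-3 - 2 * g (-1) ^ 2 + f 0 : ℝ) : ℂ)) /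
        (2 * Complex.exp (2 * Complex.I * (t : ℂ))))
    (hFhat : ∀ t : ℝ, Fhat t = Fminus t + c t) :
    ∀ t : ℝ, G t = -(F t) * Fhat t ∧
      (F t) ^ 2 * (Fhat t) ^ 2 + (3 * F t - 1) * Fhat t + F t = 0 := by
  have h : SDPRecursion f g := hrec
  have hf0 : f ≠ 0 := fun h0 => one_ne_zero (hfsum.unique (h0 ▸ hasSum_zero))
  have hnorm : (3 * g (-1) - 2 * g (-1) * g 0 : ℂ) = g (-1) ^ 2 + (3 - f 0) / 2 := by
    exact_mod_cast h.normalization hfsum hgsum hgsupp hfsymm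
  intro t
  set z := exp (I * t) with hz_def
  have hz : ‖z‖ = 1 := norm_exp_I_mul_ofReal t
  have hFz : HasSum (fun x : ℤ => (f x : ℂ) * z ^ x) (F t) :=
    hF t ▸ hasSum_ofReal_mul_exp_zpow hfsum.summable (fun x => x) t
  have hFmz : HasSum (fun k : ℕ => (f (-k - 1) : ℂ) * z ^ (-(k : ℤ) - 1)) (Fminus t) := by
    simpa only [hFminus t, Function.comp_apply, Int.cast_sub, Int.cast_neg, Int.cast_natCast,
      Int.cast_one] using
      hasSum_ofReal_mul_exp_zpow (hfsum.summable.comp_injective fun _ _ hk => by simpa using hk)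
        (fun k : ℕ => -(k : ℤ) - 1) t
  have hGz : HasSum (fun k : ℕ => (g (k - 1) : ℂ) * z ^ ((k : ℤ) - 1)) (G t) := by
    simpa only [hG t, Function.comp_apply, Int.cast_sub, Int.cast_natCast, Int.cast_one] using
      hasSum_ofReal_mul_exp_zpow (hgsum.summable.comp_injective fun _ _ hk => by simpa using hk)
        (fun k : ℕ => (k : ℤ) - 1) t
  have hsq := h.G_sq_eq hf0 hgsum.summable hz hFz hFmz hGz
  have hmul := h.three_mul_F_eq hfsum.summable hgsupp hz hFz hFmz hGz
  have hct : c t = g (-1) ^ 2 * z⁻¹ ^ 2 + (-3 - 2 * g (-1) ^ 2 + f 0) / 2 * z⁻¹ := by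
    rw [hc t, show exp (2 * I * t) = z ^ 2 by rw [hz_def, ← exp_nat_mul]; ring_nf]
    field_simp
    push_cast
    ring
  have hzz : z * z⁻¹ = 1 := mul_inv_cancel₀ (exp_ne_zero _)
  have hGF : G t = -F t * Fhat t := by
    rw [hFhat, hct]
    linear_combination (-z⁻¹) * hmul + z⁻¹ * F t * hnorm - (F t * Fminus t + G t) * hzz
  refine ⟨hGF, ?_⟩
  linear_combination hsq - hFhat t - hct - z⁻¹ * hnorm + (F t * Fhat t - G t + 3) * hGF

/-- Suppose `(f, g)` satisfies the SDP recursive equation, and define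
`F(t) = Σ_{x ∈ ℤ} f(x) e^{itx}`, `F⁻(t) = Σ_{x ≤ -1} f(x) e^{itx}`,
`G(t) = Σ_{y ≥ -1} g(y) e^{ity}`.  With
`c(t) = (2 g(-1)² + e^{it}(-3 - 2 g(-1)² + f 0)) / (2 e^{2it})` and `F̂⁻ = F⁻ + c`,
one has `G(t) = -F(t) F̂⁻(t)` and
`F(t)² F̂⁻(t)² + (3 F(t) - 1) F̂⁻(t) + F(t) = 0` for every real `t`. -/
theorem stmt_12
    (f g : ℤ → ℝ)
    (hf0 : ∀ x, 0 ≤ f x) (hg0 : ∀ y, 0 ≤ g y)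
    (hfsum : HasSum f 1) (hgsum : HasSum g 1)
    (hfsymm : ∀ x, f (-x) = f x)
    (hgsupp : ∀ y : ℤ, y ≤ -2 → g y = 0)
    (hrec : ∀ x y : ℤ, -1 ≤ y →
      3 * f x * g y =
        f x * (f y + ∑ j ∈ Finset.Icc (-1 : ℤ) (y + 1), g j * g (y - j)) +
          (if y = -1 then
            (∑' j : ℕ, f (-(j : ℤ) - 2) * f (x + (j : ℤ) + 1)) +
              g (-1) ^ 2 * f (x + 1) + g (x - 1)
            else 0))
    (F Fminus G : ℝ → ℂ)
    (hF : ∀ t : ℝ, F t = ∑' x : ℤ, (f x : ℂ) * Complex.exp (Complex.I * (t : ℂ) * (x : ℂ)))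
    (hFminus : ∀ t : ℝ, Fminus t =
      ∑' k : ℕ, (f (-(k : ℤ) - 1) : ℂ) * Complex.exp (Complex.I * (t : ℂ) * (-(k : ℂ) - 1)))
    (hG : ∀ t : ℝ, G t =
      ∑' k : ℕ, (g ((k : ℤ) - 1) : ℂ) * Complex.exp (Complex.I * (t : ℂ) * ((k : ℂ) - 1)))
    (c Fhat : ℝ → ℂ)
    (hc : ∀ t : ℝ, c t =
      (((2 * g (-1) ^ 2 : ℝ) : ℂ) +
          Complex.exp (Complex.I * (t : ℂ)) * ((-3 - 2 * g (-1) ^ 2 + f 0 : ℝ) : ℂ)) /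
        (2 * Complex.exp (2 * Complex.I * (t : ℂ))))
    (hFhat : ∀ t : ℝ, Fhat t = Fminus t + c t) :
    ∀ t : ℝ, G t = -(F t) * Fhat t ∧
      (F t) ^ 2 * (Fhat t) ^ 2 + (3 * F t - 1) * Fhat t + F t = 0 :=
  stmt_12_general f g hfsum hgsum hfsymm hgsupp hrec F Fminus G hF hFminus hG c Fhat hc hFhat
end

section
/- Fix ν ∈ (0,1) and for t > 0 define I_ν(t) = lim_{T→∞} ∫₀^T (⌊u/t⌋ + 1)^{−ν}·cos(u) du (this improper integral exists). Then as t ↓ 0, I_ν(t) = t^ν·∫₀^∞ u^{−ν}·cos(u) du + O(t) = Γ(1−ν)·sin(πν/2)·t^ν + o(t^ν). -/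
/-!
Put `a = u / t`. Since `a < ⌊a⌋ + 1 ≤ a + 1`, the integrand `(⌊a⌋ + 1)^{-ν} cos u` differs from
`a^{-ν} cos u = t^ν u^{-ν} cos u` by at most `min (a^{-ν}, a^{-ν-1})`. Integrating the first bound
over `(0, t]` and the second over `(t, ∞)` shows that the difference is absolutely integrable with
integral `O(t)`; in particular `I_ν(t)` exists and equals `t^ν ∫₀^∞ u^{-ν} cos u du + O(t)`.

To evaluate `∫₀^∞ u^{-ν} cos u du`, write `Γ(ν) u^{-ν} = ∫₀^∞ x^{ν-1} e^{-ux} dx` and swap the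
integrals over `u ∈ (0, T]`: the main term is `∫₀^∞ x^ν / (1 + x²) dx = π / (2 cos (πν/2))`
(a Beta integral, by the reflection formula), and the boundary term at `T` is `O(T^{-ν})`.
Reflection once more turns `π / (2 Γ(ν) cos (πν/2))` into `Γ(1-ν) sin (πν/2)`.
-/

open MeasureTheory Asymptotics Filter Topology Real Set

theorem integral_rpow_mul_one_sub_rpow_neg {p : ℝ} (hp0 : 0 < p) (hp1 : p < 1) :
    ∫ y in (0:ℝ)..1, y ^ (p - 1) * (1 - y) ^ (-p) = π / sin (π * p) := by
  have hB : Complex.betaIntegral p (1 - p) = ↑(∫ y in (0:ℝ)..1, y ^ (p - 1) * (1 - y) ^ (-p)) := by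
    rw [Complex.betaIntegral, ← intervalIntegral.integral_ofReal]
    refine intervalIntegral.integral_congr fun y hy => ?_
    rw [uIcc_of_le zero_le_one] at hy
    rw [Complex.ofReal_mul, Complex.ofReal_cpow hy.1, Complex.ofReal_cpow (by linarith [hy.2])]
    push_cast
    ring_nf
  have hΓ := Complex.Gamma_mul_Gamma_eq_betaIntegral (s := (p : ℂ)) (t := 1 - p)
    (by simpa using hp0) (by simpa using hp1)
  rw [add_sub_cancel, Complex.Gamma_one, one_mul, hB, ← Complex.ofReal_one, ← Complex.ofReal_sub,
    Complex.Gamma_ofReal, Complex.Gamma_ofReal, ← Complex.ofReal_mul, Complex.ofReal_inj,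
    Gamma_mul_Gamma_one_sub] at hΓ
  exact hΓ.symm

theorem integral_Ioi_rpow_mul_inv_one_add {p : ℝ} (hp0 : 0 < p) (hp1 : p < 1) :
    ∫ z in Ioi (0:ℝ), z ^ (p - 1) * (1 + z)⁻¹ = π / sin (π * p) := by
  have himage : (fun y : ℝ => y / (1 - y)) '' Ioo 0 1 = Ioi 0 := by
    ext z
    simp only [mem_image, mem_Ioo, mem_Ioi]
    constructor
    · rintro ⟨y, ⟨hy0, hy1⟩, rfl⟩
      exact div_pos hy0 (by linarith)
    · intro hz
      refine ⟨z / (1 + z), ⟨by positivity, by rw [div_lt_one (by linarith)]; linarith⟩, ?_⟩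
      field_simp
      ring
  have hderiv : ∀ y ∈ Ioo (0:ℝ) 1,
      HasDerivWithinAt (fun y : ℝ => y / (1 - y)) ((1 - y)⁻¹ ^ 2) (Ioo 0 1) y := by
    intro y hy
    have h1 : (1 : ℝ) - y ≠ 0 := by linarith [hy.2]
    refine ((hasDerivAt_id' y).div ((hasDerivAt_id' y).const_sub 1) h1).hasDerivWithinAt
      |>.congr_deriv ?_
    field_simp
    ring
  have hinj : InjOn (fun y : ℝ => y / (1 - y)) (Ioo 0 1) := by
    intro a ha b hb hab
    rw [div_eq_div_iff (by linarith [ha.2]) (by linarith [hb.2])] at hab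
    linarith
  have hintegrand : ∀ y ∈ Ioo (0:ℝ) 1,
      |(1 - y)⁻¹ ^ 2| • ((y / (1 - y)) ^ (p - 1) * (1 + y / (1 - y))⁻¹)
        = y ^ (p - 1) * (1 - y) ^ (-p) := by
    rintro y ⟨hy0, hy1⟩
    have h1 : (0:ℝ) < 1 - y := by linarith
    rw [abs_of_nonneg (by positivity), smul_eq_mul, div_rpow hy0.le h1.le,
      show 1 + y / (1 - y) = (1 - y)⁻¹ by field_simp; ring, inv_inv, rpow_sub h1, rpow_neg h1.le,
      rpow_one]
    field_simp
  rw [← himage, integral_image_eq_integral_abs_deriv_smul measurableSet_Ioo hderiv hinj,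
    setIntegral_congr_fun measurableSet_Ioo hintegrand, ← integral_Ioc_eq_integral_Ioo,
    ← intervalIntegral.integral_of_le zero_le_one, integral_rpow_mul_one_sub_rpow_neg hp0 hp1]

theorem integral_Ioi_rpow_mul_inv_one_add_sq {ν : ℝ} (hν0 : -1 < ν) (hν1 : ν < 1) :
    ∫ x in Ioi (0:ℝ), x ^ ν * (1 + x ^ 2)⁻¹ = π / (2 * cos (π * ν / 2)) := by
  have hsub := integral_comp_rpow_Ioi_of_pos
    (g := fun z : ℝ => z ^ ((ν + 1) / 2 - 1) * (1 + z)⁻¹) two_pos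
  have hintegrand : ∀ x ∈ Ioi (0:ℝ), ((2:ℝ) * x ^ ((2:ℝ) - 1)) •
      ((x ^ (2:ℝ)) ^ ((ν + 1) / 2 - 1) * (1 + x ^ (2:ℝ))⁻¹) = 2 * (x ^ ν * (1 + x ^ 2)⁻¹) := by
    intro x (hx : 0 < x)
    rw [smul_eq_mul, ← rpow_mul hx.le, rpow_two, show (2:ℝ) - 1 = 1 by norm_num, rpow_one,
      show 2 * ((ν + 1) / 2 - 1) = ν - 1 by ring, rpow_sub_one hx.ne']
    field_simp
  rw [setIntegral_congr_fun measurableSet_Ioi hintegrand, integral_const_mul,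
    integral_Ioi_rpow_mul_inv_one_add (by linarith) (by linarith),
    show π * ((ν + 1) / 2) = π * ν / 2 + π / 2 by ring, sin_add_pi_div_two] at hsub
  rw [mul_comm 2 (cos _), ← div_div, ← hsub]
  ring

theorem integrableOn_Ioi_rpow_mul_inv_one_add_sq {ν : ℝ} (hν0 : -1 < ν) (hν1 : ν < 1) :
    IntegrableOn (fun x : ℝ => x ^ ν * (1 + x ^ 2)⁻¹) (Ioi 0) := by
  have hmeas : AEStronglyMeasurable (fun x : ℝ => x ^ ν * (1 + x ^ 2)⁻¹) := by fun_prop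
  rw [← Ioc_union_Ioi_eq_Ioi zero_le_one, integrableOn_union]
  constructor
  · refine Integrable.mono' ((intervalIntegrable_iff_integrableOn_Ioc_of_le zero_le_one).mp
      (intervalIntegral.intervalIntegrable_rpow' hν0)) hmeas.restrict ?_
    filter_upwards [ae_restrict_mem measurableSet_Ioc] with x hx
    have hx0 : 0 < x := hx.1
    rw [norm_of_nonneg (by positivity)]
    exact mul_le_of_le_one_right (by positivity) (inv_le_one_of_one_le₀ (by nlinarith))
  · refine Integrable.mono' (integrableOn_Ioi_rpow_of_lt (by linarith : ν - 2 < -1) one_pos)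
      hmeas.restrict ?_
    filter_upwards [ae_restrict_mem measurableSet_Ioi] with x hx
    have hx0 : (0:ℝ) < x := one_pos.trans hx
    rw [norm_of_nonneg (by positivity), rpow_sub hx0, rpow_two, div_eq_mul_inv]
    gcongr
    linarith

theorem integrableOn_rpow_sub_one_mul_exp_neg_mul {ν r : ℝ} (hν : 0 < ν) (hr : 0 < r) :
    IntegrableOn (fun x : ℝ => x ^ (ν - 1) * exp (-(r * x))) (Ioi 0) := by
  simpa [rpow_one, neg_mul] using
    integrableOn_rpow_mul_exp_neg_mul_rpow (by linarith : -1 < ν - 1) one_pos hr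

theorem integral_rpow_sub_one_mul_exp_neg_mul {ν r : ℝ} (hν : 0 < ν) (hr : 0 < r) :
    ∫ x in Ioi (0:ℝ), x ^ (ν - 1) * exp (-(r * x)) = Gamma ν * r ^ (-ν) := by
  rw [integral_rpow_mul_exp_neg_mul_Ioi hν hr, one_div, inv_rpow hr.le, rpow_neg hr.le, mul_comm]

theorem integral_exp_neg_mul_mul_cos (x T : ℝ) :
    ∫ u in (0:ℝ)..T, exp (-(x * u)) * cos u
      = (x + exp (-(x * T)) * (sin T - x * cos T)) / (1 + x ^ 2) := by
  have hderiv : ∀ u : ℝ, HasDerivAt (fun u => exp (-(x * u)) * (sin u - x * cos u) / (1 + x ^ 2))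
      (exp (-(x * u)) * cos u) u := by
    intro u
    have hexp : HasDerivAt (fun u => -(x * u)) (-x) u :=
      ((hasDerivAt_id' u).const_mul x).neg.congr_deriv (by ring)
    have htrig : HasDerivAt (fun u => sin u - x * cos u) (cos u + x * sin u) u :=
      ((hasDerivAt_sin u).sub ((hasDerivAt_cos u).const_mul x)).congr_deriv (by ring)
    refine ((hexp.exp.mul htrig).div_const (1 + x ^ 2)).congr_deriv ?_
    field_simp
    ring
  rw [intervalIntegral.integral_eq_sub_of_hasDerivAt (fun u _ => hderiv u)
    ((by fun_prop : Continuous fun u => exp (-(x * u)) * cos u).intervalIntegrable 0 T)]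
  simp only [mul_zero, neg_zero, exp_zero, sin_zero, cos_zero]
  ring

theorem abs_sin_sub_mul_cos_div_le {x : ℝ} (hx : 0 ≤ x) (T : ℝ) :
    |sin T - x * cos T| / (1 + x ^ 2) ≤ 2 := by
  have h : |sin T - x * cos T| ≤ 1 + x :=
    calc |sin T - x * cos T| ≤ |sin T| + x * |cos T| := by
          simpa only [abs_mul, abs_of_nonneg hx] using abs_sub (sin T) (x * cos T)
      _ ≤ 1 + x * 1 := by gcongr; exacts [abs_sin_le_one T, abs_cos_le_one T]
      _ = 1 + x := by ring
  rw [div_le_iff₀ (by positivity)]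
  nlinarith [sq_nonneg (x - 1)]

/-- The boundary term at `u = T` left by `∫₀ᵀ e^{-xu} cos u du`, weighted by `x^{ν-1}`. -/
noncomputable def cosLaplaceTail (ν T x : ℝ) : ℝ :=
  x ^ (ν - 1) * (exp (-(x * T)) * (sin T - x * cos T) / (1 + x ^ 2))

theorem norm_cosLaplaceTail_le {ν T x : ℝ} (hx : 0 < x) :
    ‖cosLaplaceTail ν T x‖ ≤ 2 * (x ^ (ν - 1) * exp (-(T * x))) := by
  rw [cosLaplaceTail, mul_div_assoc, norm_mul, norm_mul, norm_of_nonneg (by positivity),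
    norm_of_nonneg (exp_nonneg _), Real.norm_eq_abs, abs_div,
    abs_of_pos (by positivity : (0:ℝ) < 1 + x ^ 2), mul_comm x T]
  calc x ^ (ν - 1) * (exp (-(T * x)) * (|sin T - x * cos T| / (1 + x ^ 2)))
      ≤ x ^ (ν - 1) * (exp (-(T * x)) * 2) := by gcongr; exact abs_sin_sub_mul_cos_div_le hx.le T
    _ = 2 * (x ^ (ν - 1) * exp (-(T * x))) := by ring

theorem integrableOn_cosLaplaceTail {ν T : ℝ} (hν : 0 < ν) (hT : 0 < T) :
    IntegrableOn (cosLaplaceTail ν T) (Ioi 0) := by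
  refine Integrable.mono' ((integrableOn_rpow_sub_one_mul_exp_neg_mul hν hT).const_mul 2)
    (by unfold cosLaplaceTail; fun_prop) ?_
  filter_upwards [ae_restrict_mem measurableSet_Ioi] with x hx
  exact norm_cosLaplaceTail_le hx

theorem tendsto_integral_cosLaplaceTail {ν : ℝ} (hν : 0 < ν) :
    Tendsto (fun T => ∫ x in Ioi (0:ℝ), cosLaplaceTail ν T x) atTop (𝓝 0) := by
  refine squeeze_zero_norm' ?_ (by simpa using (tendsto_rpow_neg_atTop hν).const_mul (2 * Gamma ν))
  filter_upwards [eventually_gt_atTop 0] with T hT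
  calc ‖∫ x in Ioi (0:ℝ), cosLaplaceTail ν T x‖
      ≤ ∫ x in Ioi (0:ℝ), 2 * (x ^ (ν - 1) * exp (-(T * x))) := by
        refine norm_integral_le_of_norm_le
          ((integrableOn_rpow_sub_one_mul_exp_neg_mul hν hT).const_mul 2) ?_
        filter_upwards [ae_restrict_mem measurableSet_Ioi] with x hx
        exact norm_cosLaplaceTail_le hx
    _ = 2 * Gamma ν * T ^ (-ν) := by
        rw [integral_const_mul, integral_rpow_sub_one_mul_exp_neg_mul hν hT, mul_assoc]

theorem integrable_prod_rpow_mul_exp_mul_cos {ν : ℝ} (hν0 : 0 < ν) (hν1 : ν < 1) (T : ℝ) :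
    Integrable (Function.uncurry fun u x : ℝ => x ^ (ν - 1) * exp (-(u * x)) * cos u)
      ((volume.restrict (Ioc 0 T)).prod (volume.restrict (Ioi 0))) := by
  have hmeas : AEStronglyMeasurable
      (Function.uncurry fun u x : ℝ => x ^ (ν - 1) * exp (-(u * x)) * cos u)
      ((volume.restrict (Ioc 0 T)).prod (volume.restrict (Ioi 0))) := by
    unfold Function.uncurry; fun_prop
  refine (integrable_prod_iff hmeas).2 ⟨?_, ?_⟩
  · filter_upwards [ae_restrict_mem measurableSet_Ioc] with u hu
    exact (integrableOn_rpow_sub_one_mul_exp_neg_mul hν0 hu.1).mul_const (cos u)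
  refine Integrable.mono'
    ((intervalIntegral.intervalIntegrable_rpow' (by linarith : -1 < -ν)).1.const_mul (Gamma ν))
    hmeas.norm.integral_prod_right' ?_
  filter_upwards [ae_restrict_mem measurableSet_Ioc] with u hu
  have hslice : ∫ x in Ioi (0:ℝ), ‖x ^ (ν - 1) * exp (-(u * x)) * cos u‖
      = (∫ x in Ioi (0:ℝ), x ^ (ν - 1) * exp (-(u * x))) * |cos u| := by
    rw [← integral_mul_const]
    refine setIntegral_congr_fun measurableSet_Ioi fun x (hx : 0 < x) => ?_
    rw [norm_mul, norm_mul, norm_of_nonneg (by positivity), norm_of_nonneg (exp_nonneg _),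
      Real.norm_eq_abs]
  simp only [Function.uncurry_apply_pair]
  rw [norm_of_nonneg (integral_nonneg fun _ => norm_nonneg _), hslice,
    integral_rpow_sub_one_mul_exp_neg_mul hν0 hu.1]
  exact mul_le_of_le_one_right (mul_nonneg (Gamma_pos_of_pos hν0).le (rpow_nonneg hu.1.le _))
    (abs_cos_le_one u)

theorem Gamma_mul_integral_rpow_neg_mul_cos {ν T : ℝ} (hν0 : 0 < ν) (hν1 : ν < 1) (hT : 0 < T) :
    Gamma ν * ∫ u in (0:ℝ)..T, u ^ (-ν) * cos u
      = π / (2 * cos (π * ν / 2)) + ∫ x in Ioi (0:ℝ), cosLaplaceTail ν T x := by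
  have hslice : ∀ u ∈ Ioc (0:ℝ) T, Gamma ν * (u ^ (-ν) * cos u)
      = ∫ x in Ioi (0:ℝ), x ^ (ν - 1) * exp (-(u * x)) * cos u := by
    intro u hu
    rw [integral_mul_const, integral_rpow_sub_one_mul_exp_neg_mul hν0 hu.1, mul_assoc]
  have hinner : ∀ x ∈ Ioi (0:ℝ), ∫ u in Ioc (0:ℝ) T, x ^ (ν - 1) * exp (-(u * x)) * cos u
      = x ^ ν * (1 + x ^ 2)⁻¹ + cosLaplaceTail ν T x := by
    intro x (hx : 0 < x)
    calc ∫ u in Ioc (0:ℝ) T, x ^ (ν - 1) * exp (-(u * x)) * cos u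
        = x ^ (ν - 1) * ∫ u in (0:ℝ)..T, exp (-(x * u)) * cos u := by
          rw [intervalIntegral.integral_of_le hT.le, ← integral_const_mul]
          refine setIntegral_congr_fun measurableSet_Ioc fun u _ => ?_
          ring_nf
      _ = x ^ ν * (1 + x ^ 2)⁻¹ + cosLaplaceTail ν T x := by
          rw [integral_exp_neg_mul_mul_cos, cosLaplaceTail, rpow_sub_one hx.ne']
          field_simp
  rw [intervalIntegral.integral_of_le hT.le, ← integral_const_mul,
    setIntegral_congr_fun measurableSet_Ioc hslice,
    integral_integral_swap (integrable_prod_rpow_mul_exp_mul_cos hν0 hν1 T),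
    setIntegral_congr_fun measurableSet_Ioi hinner,
    integral_add (integrableOn_Ioi_rpow_mul_inv_one_add_sq (by linarith) hν1)
      (integrableOn_cosLaplaceTail hν0 hT),
    integral_Ioi_rpow_mul_inv_one_add_sq (by linarith) hν1]

theorem Gamma_one_sub_mul_sin_pi_mul_div_two {ν : ℝ} (hν0 : 0 < ν) (hν1 : ν < 1) :
    Gamma (1 - ν) * sin (π * ν / 2) = (Gamma ν)⁻¹ * (π / (2 * cos (π * ν / 2))) := by
  have hcos : 0 < cos (π * ν / 2) :=
    cos_pos_of_mem_Ioo ⟨by nlinarith [pi_pos], by nlinarith [pi_pos]⟩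
  have hsin : 0 < sin (π * ν / 2) := sin_pos_of_pos_of_lt_pi (by positivity) (by nlinarith [pi_pos])
  have hΓ : 0 < Gamma ν := Gamma_pos_of_pos hν0
  have hrefl := Gamma_mul_Gamma_one_sub ν
  rw [show π * ν = 2 * (π * ν / 2) by ring, sin_two_mul] at hrefl
  rw [eq_inv_mul_iff_mul_eq₀ hΓ.ne', ← mul_assoc, hrefl]
  field_simp

theorem tendsto_integral_rpow_neg_mul_cos {ν : ℝ} (hν0 : 0 < ν) (hν1 : ν < 1) :
    Tendsto (fun T => ∫ u in (0:ℝ)..T, u ^ (-ν) * cos u) atTop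
      (𝓝 (Gamma (1 - ν) * sin (π * ν / 2))) := by
  rw [Gamma_one_sub_mul_sin_pi_mul_div_two hν0 hν1, ← add_zero (π / _)]
  refine ((tendsto_const_nhds.add (tendsto_integral_cosLaplaceTail hν0)).const_mul _).congr' ?_
  filter_upwards [eventually_gt_atTop 0] with T hT
  rw [← Gamma_mul_integral_rpow_neg_mul_cos hν0 hν1 hT,
    inv_mul_cancel_left₀ (Gamma_pos_of_pos hν0).ne']

theorem rpow_neg_sub_rpow_neg_le {ν a b : ℝ} (hν : ν ≤ 1) (ha : 0 < a) (hab : a ≤ b) :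
    a ^ (-ν) - b ^ (-ν) ≤ a ^ (-(ν + 1)) * (b - a) := by
  have hb : 0 < b := ha.trans_le hab
  have hratio : a / b ≤ (a / b) ^ ν := by
    simpa using rpow_le_rpow_of_exponent_ge (div_pos ha hb) (div_le_one_of_le₀ hab hb.le) hν
  have hbν : b ^ (-ν) = a ^ (-ν) * (a / b) ^ ν := by
    rw [div_rpow ha.le hb.le, rpow_neg ha.le, rpow_neg hb.le]
    field_simp
  calc a ^ (-ν) - b ^ (-ν) = a ^ (-ν) * (1 - (a / b) ^ ν) := by rw [hbν]; ring
    _ ≤ a ^ (-ν) * ((b - a) / b) := by rw [sub_div, div_self hb.ne']; gcongr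
    _ ≤ a ^ (-ν) * ((b - a) / a) := by gcongr
    _ = a ^ (-(ν + 1)) * (b - a) := by rw [neg_add, rpow_add ha, rpow_neg_one]; ring

theorem abs_floor_add_one_rpow_neg_sub_le {ν a : ℝ} (hν0 : 0 ≤ ν) (hν1 : ν ≤ 1) (ha : 0 < a) :
    |((⌊a⌋ : ℝ) + 1) ^ (-ν) - a ^ (-ν)| ≤ min (a ^ (-ν)) (a ^ (-(ν + 1))) := by
  have hlt : a < (⌊a⌋ : ℝ) + 1 := Int.lt_floor_add_one a
  rw [abs_sub_comm, abs_of_nonneg (sub_nonneg.2 (rpow_le_rpow_of_nonpos ha hlt.le (by linarith)))]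
  refine le_min (sub_le_self _ (by positivity)) ?_
  calc a ^ (-ν) - ((⌊a⌋ : ℝ) + 1) ^ (-ν) ≤ a ^ (-(ν + 1)) * ((⌊a⌋ : ℝ) + 1 - a) :=
        rpow_neg_sub_rpow_neg_le hν1 ha hlt.le
    _ ≤ a ^ (-(ν + 1)) := mul_le_of_le_one_right (by positivity) (by linarith [Int.floor_le a])

noncomputable def floorDefect (ν t u : ℝ) : ℝ :=
  ((⌊u / t⌋ : ℝ) + 1) ^ (-ν) * cos u - t ^ ν * (u ^ (-ν) * cos u)

section FloorDefect

variable {ν t : ℝ}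

theorem measurable_floorDefect : Measurable (floorDefect ν t) := by
  unfold floorDefect
  fun_prop

theorem norm_floorDefect_le (hν0 : 0 ≤ ν) (hν1 : ν ≤ 1) (ht : 0 < t) {u : ℝ} (hu : 0 < u) :
    ‖floorDefect ν t u‖ ≤ min (t ^ ν * u ^ (-ν)) (t ^ (ν + 1) * u ^ (-(ν + 1))) := by
  have hscale : ∀ s : ℝ, (u / t) ^ (-s) = t ^ s * u ^ (-s) := fun s => by
    rw [div_rpow hu.le ht.le, rpow_neg ht.le, div_inv_eq_mul, mul_comm]
  have hdefect : floorDefect ν t u = (((⌊u / t⌋ : ℝ) + 1) ^ (-ν) - (u / t) ^ (-ν)) * cos u := by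
    rw [floorDefect, hscale]
    ring
  rw [hdefect, norm_mul, Real.norm_eq_abs, ← hscale, ← hscale]
  exact (mul_le_of_le_one_right (abs_nonneg _) (by simpa using abs_cos_le_one u)).trans
    (abs_floor_add_one_rpow_neg_sub_le hν0 hν1 (div_pos hu ht))

theorem integral_Ioc_const_mul_rpow_neg (hν : ν < 1) (ht : 0 < t) :
    ∫ u in Ioc 0 t, t ^ ν * u ^ (-ν) = t / (1 - ν) := by
  rw [integral_const_mul, ← intervalIntegral.integral_of_le ht.le,
    integral_rpow (Or.inl (by linarith : -1 < -ν)), zero_rpow (by linarith : -ν + 1 ≠ 0),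
    sub_zero, mul_div_assoc', ← rpow_add ht, add_neg_cancel_left, rpow_one, neg_add_eq_sub]

theorem integral_Ioi_const_mul_rpow_neg_add_one (hν : 0 < ν) (ht : 0 < t) :
    ∫ u in Ioi t, t ^ (ν + 1) * u ^ (-(ν + 1)) = t / ν := by
  rw [integral_const_mul, integral_Ioi_rpow_of_lt (by linarith) ht,
    show -(ν + 1) + 1 = -ν by ring, neg_div_neg_eq, mul_div_assoc', ← rpow_add ht,
    add_neg_cancel_comm, rpow_one]

theorem integrableOn_floorDefect_Ioc (hν0 : 0 ≤ ν) (hν1 : ν < 1) (ht : 0 < t) :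
    IntegrableOn (floorDefect ν t) (Ioc 0 t) := by
  refine Integrable.mono'
    ((intervalIntegral.intervalIntegrable_rpow' (by linarith : -1 < -ν)).1.const_mul (t ^ ν))
    measurable_floorDefect.aestronglyMeasurable ?_
  filter_upwards [ae_restrict_mem measurableSet_Ioc] with u hu
  exact (norm_floorDefect_le hν0 hν1.le ht hu.1).trans (min_le_left _ _)

theorem integrableOn_floorDefect_Ioi (hν0 : 0 < ν) (hν1 : ν ≤ 1) (ht : 0 < t) :
    IntegrableOn (floorDefect ν t) (Ioi t) := by
  refine Integrable.mono'
    ((integrableOn_Ioi_rpow_of_lt (by linarith : -(ν + 1) < -1) ht).const_mul (t ^ (ν + 1)))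
    measurable_floorDefect.aestronglyMeasurable ?_
  filter_upwards [ae_restrict_mem measurableSet_Ioi] with u (hu : t < u)
  exact (norm_floorDefect_le hν0.le hν1 ht (ht.trans hu)).trans (min_le_right _ _)

theorem integrableOn_floorDefect (hν0 : 0 < ν) (hν1 : ν < 1) (ht : 0 < t) :
    IntegrableOn (floorDefect ν t) (Ioi 0) := by
  rw [← Ioc_union_Ioi_eq_Ioi ht.le]
  exact (integrableOn_floorDefect_Ioc hν0.le hν1 ht).union
    (integrableOn_floorDefect_Ioi hν0 hν1.le ht)

theorem norm_integral_floorDefect_le (hν0 : 0 < ν) (hν1 : ν < 1) (ht : 0 < t) :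
    ‖∫ u in Ioi 0, floorDefect ν t u‖ ≤ (1 / (1 - ν) + 1 / ν) * t := by
  have hnear : ‖∫ u in Ioc 0 t, floorDefect ν t u‖ ≤ t / (1 - ν) := by
    rw [← integral_Ioc_const_mul_rpow_neg hν1 ht]
    refine norm_integral_le_of_norm_le
      ((intervalIntegral.intervalIntegrable_rpow' (by linarith : -1 < -ν)).1.const_mul (t ^ ν)) ?_
    filter_upwards [ae_restrict_mem measurableSet_Ioc] with u hu
    exact (norm_floorDefect_le hν0.le hν1.le ht hu.1).trans (min_le_left _ _)
  have hfar : ‖∫ u in Ioi t, floorDefect ν t u‖ ≤ t / ν := by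
    rw [← integral_Ioi_const_mul_rpow_neg_add_one hν0 ht]
    refine norm_integral_le_of_norm_le
      ((integrableOn_Ioi_rpow_of_lt (by linarith : -(ν + 1) < -1) ht).const_mul (t ^ (ν + 1))) ?_
    filter_upwards [ae_restrict_mem measurableSet_Ioi] with u (hu : t < u)
    exact (norm_floorDefect_le hν0.le hν1.le ht (ht.trans hu)).trans (min_le_right _ _)
  rw [← Ioc_union_Ioi_eq_Ioi ht.le, setIntegral_union (Ioc_disjoint_Ioi le_rfl) measurableSet_Ioi
    (integrableOn_floorDefect_Ioc hν0.le hν1 ht) (integrableOn_floorDefect_Ioi hν0 hν1.le ht)]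
  calc _ ≤ t / (1 - ν) + t / ν := (norm_add_le _ _).trans (add_le_add hnear hfar)
    _ = (1 / (1 - ν) + 1 / ν) * t := by ring

theorem isBigO_integral_floorDefect (hν0 : 0 < ν) (hν1 : ν < 1) :
    (fun t => ∫ u in Ioi 0, floorDefect ν t u) =O[𝓝[>] 0] fun t => t := by
  refine isBigO_iff.2 ⟨1 / (1 - ν) + 1 / ν, ?_⟩
  filter_upwards [self_mem_nhdsWithin] with t (ht : 0 < t)
  rw [norm_of_nonneg ht.le]
  exact norm_integral_floorDefect_le hν0 hν1 ht

end FloorDefect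

theorem isLittleO_id_rpow_nhdsGT_zero {ν : ℝ} (hν : ν < 1) :
    (fun t : ℝ => t) =o[𝓝[>] 0] fun t => t ^ ν := by
  have hlim : Tendsto (fun t : ℝ => t ^ (1 - ν)) (𝓝[>] 0) (𝓝 0) := by
    simpa [zero_rpow (sub_pos.2 hν).ne'] using
      (continuousAt_rpow_const 0 (1 - ν) (Or.inr (sub_pos.2 hν).le)).tendsto.mono_left
        nhdsWithin_le_nhds
  refine (((isLittleO_one_iff ℝ).2 hlim).mul_isBigO (isBigO_refl (fun t : ℝ => t ^ ν) _)).congr'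
    ?_ (by simp)
  filter_upwards [self_mem_nhdsWithin] with t (ht : 0 < t)
  rw [← rpow_add ht, sub_add_cancel, rpow_one]

theorem tendsto_integral_floor_add_one_rpow_neg_mul_cos {ν t : ℝ} (hν0 : 0 < ν) (hν1 : ν < 1)
    (ht : 0 < t) :
    Tendsto (fun T => ∫ u in (0:ℝ)..T, ((⌊u / t⌋ : ℝ) + 1) ^ (-ν) * cos u) atTop
      (𝓝 ((∫ u in Ioi 0, floorDefect ν t u) + t ^ ν * (Gamma (1 - ν) * sin (π * ν / 2)))) := by
  refine ((intervalIntegral_tendsto_integral_Ioi 0 (integrableOn_floorDefect hν0 hν1 ht)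
    tendsto_id).add ((tendsto_integral_rpow_neg_mul_cos hν0 hν1).const_mul (t ^ ν))).congr' ?_
  filter_upwards [eventually_ge_atTop 0] with T hT
  have hdefect : IntervalIntegrable (floorDefect ν t) volume 0 T :=
    (intervalIntegrable_iff_integrableOn_Ioc_of_le hT).2
      ((integrableOn_floorDefect hν0 hν1 ht).mono_set Ioc_subset_Ioi_self)
  have hlimit : IntervalIntegrable (fun u : ℝ => u ^ (-ν) * cos u) volume 0 T :=
    (intervalIntegral.intervalIntegrable_rpow' (by linarith)).mul_continuousOn
      continuous_cos.continuousOn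
  rw [id, ← intervalIntegral.integral_const_mul, ← intervalIntegral.integral_add hdefect
    (hlimit.const_mul _)]
  refine intervalIntegral.integral_congr fun u _ => ?_
  simp only [floorDefect]
  ring

/-- Fix `ν ∈ (0,1)` and for `t > 0` let
`I_ν(t) = lim_{T → ∞} ∫₀ᵀ (⌊u/t⌋ + 1)^{-ν} cos(u) du` (the improper integral exists).
Then as `t ↓ 0`,
`I_ν(t) = t^ν ∫₀^∞ u^{-ν} cos(u) du + O(t) = Γ(1-ν) sin(πν/2) t^ν + o(t^ν)`,
where the classical improper integral `∫₀^∞ u^{-ν} cos(u) du` converges to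
`Γ(1-ν) sin(πν/2)`. -/
theorem stmt_19
    (ν : ℝ) (hν0 : 0 < ν) (hν1 : ν < 1) :
    ∃ I : ℝ → ℝ,
      (∀ t : ℝ, 0 < t →
        Tendsto (fun T : ℝ => ∫ u in (0 : ℝ)..T, ((⌊u / t⌋ : ℝ) + 1) ^ (-ν) * Real.cos u)
          atTop (nhds (I t))) ∧
      Tendsto (fun T : ℝ => ∫ u in (0 : ℝ)..T, u ^ (-ν) * Real.cos u)
        atTop (nhds (Real.Gamma (1 - ν) * Real.sin (Real.pi * ν / 2))) ∧
      ((fun t : ℝ => I t - t ^ ν * (Real.Gamma (1 - ν) * Real.sin (Real.pi * ν / 2)))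
        =O[𝓝[>] (0 : ℝ)] fun t : ℝ => t) ∧
      ((fun t : ℝ => I t - Real.Gamma (1 - ν) * Real.sin (Real.pi * ν / 2) * t ^ ν)
        =o[𝓝[>] (0 : ℝ)] fun t : ℝ => t ^ ((ν : ℝ))) := by
  have hdefect := isBigO_integral_floorDefect hν0 hν1
  refine ⟨fun t => (∫ u in Ioi 0, floorDefect ν t u) + t ^ ν * (Gamma (1 - ν) * sin (π * ν / 2)),
    fun t ht => tendsto_integral_floor_add_one_rpow_neg_mul_cos hν0 hν1 ht,
    tendsto_integral_rpow_neg_mul_cos hν0 hν1, ?_, ?_⟩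
  · simpa only [add_sub_cancel_right] using hdefect
  · refine (hdefect.congr_left fun t => ?_).trans_isLittleO (isLittleO_id_rpow_nhdsGT_zero hν1)
    ring
end
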